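/- arXiv:2109.08572 — 9 statements merged into one kernel-verified Lean document; each statement's English description precedes it below -/
import Mathlib

section
/- Let K be a set of k-subspaces in PG(N,q), where 0 ≤ k ≤ N−1. If no (N−k−1)-dimensional subspace of PG(N,q) meets every element of K, then the union of the elements of K is a strong k-blocking set, i.e., K is a higgledy-piggledy set of k-subspaces. -/
open Module

namespace HP

variable (F : Type*) [Field F] (V : Type*) [AddCommGroup V] [Module F V]

/-- The set of points of the projective space `PG(V)` lying in a linear subspace `W`.
A projective point lies in `W` iff its representing one-dimensional subspace is below `W`. -/
def ptsIn (W : Submodule F V) : Set (Projectivization F V) := {P | P.submodule ≤ W}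

/-- The linear span of a set of projective points. -/
noncomputable def spanPts (S : Set (Projectivization F V)) : Submodule F V :=
  ⨆ P ∈ S, P.submodule

/-- `S` is a strong `k`-blocking set of an ambient projective space of projective
dimension `N`: every `(N-k)`-dimensional projective subspace `W` (i.e. linear subspace of
rank `N-k+1`) is spanned by its intersection with `S`. -/
def StrongBlock (N k : ℕ) (S : Set (Projectivization F V)) : Prop :=
  ∀ W : Submodule F V, finrank F W = N - k + 1 →
    spanPts F V (S ∩ ptsIn F V W) = W

end HP

open HP Submodule

namespace HP

variable {F V : Type*} [Field F] [AddCommGroup V] [Module F V]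

theorem exists_le_finrank_eq [FiniteDimensional F V] (U : Submodule F V) {d : ℕ}
    (hUd : finrank F U ≤ d) (hd : d ≤ finrank F V) :
    ∃ W : Submodule F V, U ≤ W ∧ finrank F W = d := by
  induction h : d - finrank F U generalizing U with
  | zero => exact ⟨U, le_rfl, by omega⟩
  | succ n ih =>
    obtain ⟨v, -, hv⟩ := SetLike.exists_of_lt (U.lt_top_of_finrank_lt_finrank (by omega))
    have hrank := finrank_sup_span_singleton hv
    obtain ⟨W, hUW, hW⟩ := ih (U ⊔ span F {v}) (by omega) (by omega)
    exact ⟨W, le_sup_left.trans hUW, hW⟩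

theorem inf_ne_bot_of_finrank_lt_add [FiniteDimensional F V] {A B : Submodule F V}
    (h : finrank F V < finrank F A + finrank F B) : A ⊓ B ≠ ⊥ := fun hAB =>
  h.not_ge (finrank_add_finrank_le_of_disjoint (disjoint_iff.mpr hAB))

theorem mk_mem_ptsIn_iff {W : Submodule F V} {v : V} (hv : v ≠ 0) :
    Projectivization.mk F v hv ∈ ptsIn F V W ↔ v ∈ W := by
  simp only [ptsIn, Set.mem_ofPred_eq, Projectivization.submodule_mk, span_singleton_le_iff_mem]

theorem spanPts_inter_ptsIn_le (S : Set (Projectivization F V)) (W : Submodule F V) :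
    spanPts F V (S ∩ ptsIn F V W) ≤ W :=
  iSup₂_le fun _ hP => hP.2

theorem mem_spanPts {S : Set (Projectivization F V)} {v : V} (hv : v ≠ 0)
    (hvS : Projectivization.mk F v hv ∈ S) : v ∈ spanPts F V S :=
  (le_iSup₂ (f := fun P (_ : P ∈ S) => P.submodule) _ hvS :)
    (by rw [Projectivization.submodule_mk]; exact mem_span_singleton_self v)

theorem inf_spanPts_inter_ptsIn_ne_bot {S : Set (Projectivization F V)} {κ W : Submodule F V}
    (hκS : ptsIn F V κ ⊆ S) (hκW : κ ⊓ W ≠ ⊥) : κ ⊓ spanPts F V (S ∩ ptsIn F V W) ≠ ⊥ := by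
  obtain ⟨v, ⟨hvκ, hvW⟩, hv⟩ := (Submodule.ne_bot_iff _).mp hκW
  have hvS : Projectivization.mk F v hv ∈ S ∩ ptsIn F V W :=
    ⟨hκS ((mk_mem_ptsIn_iff hv).2 hvκ), (mk_mem_ptsIn_iff hv).2 hvW⟩
  exact (Submodule.ne_bot_iff _).mpr ⟨v, ⟨hvκ, mem_spanPts hv hvS⟩, hv⟩

/-- The span `U` of the points of `⋃ K` in `W` still meets every element of `K`; were it a
proper subspace of `W`, it could be enlarged to a subspace of rank `d` meeting every element
of `K`. -/
theorem spanPts_iUnion_ptsIn_inter_eq [FiniteDimensional F V] {K : Set (Submodule F V)}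
    {W : Submodule F V} {d : ℕ}
    (hno : ¬ ∃ W' : Submodule F V, finrank F W' = d ∧ ∀ κ ∈ K, κ ⊓ W' ≠ ⊥)
    (hW : finrank F W ≤ d + 1) (hd : d ≤ finrank F V) (hmeet : ∀ κ ∈ K, κ ⊓ W ≠ ⊥) :
    spanPts F V ((⋃ κ ∈ K, ptsIn F V κ) ∩ ptsIn F V W) = W := by
  set U := spanPts F V ((⋃ κ ∈ K, ptsIn F V κ) ∩ ptsIn F V W)
  have hUW : U ≤ W := spanPts_inter_ptsIn_le _ W
  refine hUW.antisymm (not_not.mp fun hWU => hno ?_)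
  have hlt : U < W := hUW.lt_of_not_ge hWU
  have hUd : finrank F U ≤ d := by
    have := finrank_lt_finrank_of_lt hlt
    omega
  obtain ⟨W', hUW', hW'⟩ := exists_le_finrank_eq U hUd hd
  refine ⟨W', hW', fun κ hκ hbot => ?_⟩
  refine inf_spanPts_inter_ptsIn_ne_bot (Set.subset_biUnion_of_mem hκ) (hmeet κ hκ) ?_
  exact le_bot_iff.mp (hbot ▸ inf_le_inf_left κ hUW')

end HP

theorem stmt_1_general (F : Type*) [Field F] (N k : ℕ)
    (K : Set (Submodule F (Fin (N + 1) → F)))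
    (hdim : ∀ κ ∈ K, finrank F κ = k + 1)
    (hno : ¬ ∃ W : Submodule F (Fin (N + 1) → F),
      finrank F W = (N - k - 1) + 1 ∧ ∀ κ ∈ K, κ ⊓ W ≠ ⊥) :
    StrongBlock F (Fin (N + 1) → F) N k (⋃ κ ∈ K, ptsIn F (Fin (N + 1) → F) κ) := by
  have hrank : finrank F (Fin (N + 1) → F) = N + 1 := finrank_fin_fun F
  intro W hW
  refine spanPts_iUnion_ptsIn_inter_eq hno (by omega) (by omega) fun κ hκ => ?_
  exact inf_ne_bot_of_finrank_lt_add (by rw [hrank, hdim κ hκ, hW]; omega)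

/-- if no `(N-k-1)`-subspace meets every element of a set `K` of
`k`-subspaces of `PG(N,q)`, then the union of the point sets of the elements of `K`
is a strong `k`-blocking set, i.e. `K` is a higgledy-piggledy set of `k`-subspaces. -/
theorem stmt_1 (F : Type*) [Field F] [Fintype F] (N k : ℕ) (hk : k ≤ N - 1)
    (K : Set (Submodule F (Fin (N + 1) → F)))
    (hdim : ∀ κ ∈ K, finrank F κ = k + 1)
    (hno : ¬ ∃ W : Submodule F (Fin (N + 1) → F),
      finrank F W = (N - k - 1) + 1 ∧ ∀ κ ∈ K, κ ⊓ W ≠ ⊥) :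
    StrongBlock F (Fin (N + 1) → F) N k (⋃ κ ∈ K, ptsIn F (Fin (N + 1) → F) κ) :=
  stmt_1_general F N k K hdim hno
end

section
/- Let B be a strong k-blocking set of PG(N,q), Σ a hyperplane, and P a point lying neither in B nor in Σ. Then the projection B' = { ⟨P,S⟩ ∩ Σ : S ∈ B } is a strong k-blocking set of Σ ≅ PG(N−1,q). -/
open Module

open HP

/-!
Let `W ≤ Σ` have the rank in the conclusion. Since `P ∉ Σ`, the cone `⟨P, W⟩` has rank one more,
which is the rank on which `B` is blocking, so `⟨P, W⟩` is spanned by points `S ∈ B`. As `P` and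
`Σ` are complementary, the modular law gives `S ≤ P ⊔ ((P ⊔ S) ⊓ Σ)`, and `(P ⊔ S) ⊓ Σ` is the
projection of `S` (for `S ≠ P`), a point of `W`. Hence `⟨P, W⟩ ≤ P ⊔ T` for the span `T` of the
projected points in `W`, and intersecting with `Σ` gives `W ≤ (P ⊔ T) ⊓ Σ = T`.
-/

open scoped LinearAlgebra.Projectivization

section ModularLattice

variable {α : Type*} [Lattice α] [BoundedOrder α] [IsModularLattice α] {a b c : α}

theorem sup_sup_inf_eq_of_codisjoint (h : Codisjoint a c) (b : α) :
    a ⊔ (a ⊔ b) ⊓ c = a ⊔ b := by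
  rw [inf_comm, ← sup_inf_assoc_of_le c le_sup_left, h.eq_top, top_inf_eq]

theorem sup_inf_eq_of_disjoint (h : Disjoint a c) (hbc : b ≤ c) : (a ⊔ b) ⊓ c = b := by
  rw [sup_comm, sup_inf_assoc_of_le a hbc, h.eq_bot, sup_bot_eq]

end ModularLattice

namespace Submodule

variable {K V : Type*} [DivisionRing K] [AddCommGroup V] [Module K V]

theorem finrank_sup_of_disjoint {s t : Submodule K V} [FiniteDimensional K s]
    [FiniteDimensional K t] (h : Disjoint s t) :
    finrank K ↥(s ⊔ t) = finrank K s + finrank K t := by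
  rw [← finrank_sup_add_finrank_inf_eq, h.eq_bot, finrank_bot, add_zero]

theorem finrank_add_finrank_inf_of_isCompl {A B X : Submodule K V} [FiniteDimensional K X]
    (hAB : IsCompl A B) (hAX : A ≤ X) : finrank K A + finrank K ↥(X ⊓ B) = finrank K X := by
  have : FiniteDimensional K A := finiteDimensional_of_le hAX
  have hX : A ⊔ X ⊓ B = X := by
    rw [inf_comm, ← sup_inf_assoc_of_le B hAX, hAB.codisjoint.eq_top, top_inf_eq]
  rw [← finrank_sup_of_disjoint (hAB.disjoint.mono_right inf_le_right), hX]

end Submodule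

namespace Projectivization

variable {K V : Type*} [Field K] [AddCommGroup V] [Module K V]

theorem disjoint_submodule_of_not_le (P : ℙ K V) {W : Submodule K V}
    (h : ¬ P.submodule ≤ W) : Disjoint P.submodule W := by
  rw [submodule_eq, Submodule.span_singleton_le_iff_mem] at *
  exact (Submodule.disjoint_span_singleton_of_notMem h).symm

theorem isCompl_submodule_of_not_le [FiniteDimensional K V] (P : ℙ K V) {H : Submodule K V}
    (hH : finrank K H + 1 = finrank K V) (h : ¬ P.submodule ≤ H) : IsCompl P.submodule H :=
  (Submodule.isCompl_iff_disjoint _ _ (by rw [finrank_submodule]; omega)).mpr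
    (P.disjoint_submodule_of_not_le h)

theorem finrank_sup_submodule_of_ne {P S : ℙ K V} (h : P ≠ S) :
    finrank K ↥(P.submodule ⊔ S.submodule) = 2 := by
  have hPS : ¬ P.submodule ≤ S.submodule := fun hle => h <| submodule_injective <|
    Submodule.eq_of_le_of_finrank_eq hle (by rw [finrank_submodule, finrank_submodule])
  rw [Submodule.finrank_sup_of_disjoint (P.disjoint_submodule_of_not_le hPS),
    finrank_submodule, finrank_submodule]

theorem finrank_sup_inf_of_isCompl {P S : ℙ K V} {H : Submodule K V}
    (hPH : IsCompl P.submodule H) (h : P ≠ S) :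
    finrank K ↥((P.submodule ⊔ S.submodule) ⊓ H) = 1 := by
  have := Submodule.finrank_add_finrank_inf_of_isCompl hPH (le_sup_left (b := S.submodule))
  rw [finrank_sup_submodule_of_ne h, finrank_submodule] at this
  omega

end Projectivization

namespace HP

variable {K V : Type*} [Field K] [AddCommGroup V] [Module K V]

def projection (P : ℙ K V) (H : Submodule K V) (B : Set (ℙ K V)) : Set (ℙ K V) :=
  {Q | ∃ S ∈ B, Q.submodule = (P.submodule ⊔ S.submodule) ⊓ H}

theorem le_spanPts {S : Set (ℙ K V)} {Q : ℙ K V} (hQ : Q ∈ S) :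
    Q.submodule ≤ spanPts K V S :=
  le_iSup₂_of_le Q hQ le_rfl

theorem spanPts_le_iff {S : Set (ℙ K V)} {W : Submodule K V} :
    spanPts K V S ≤ W ↔ ∀ Q ∈ S, Q.submodule ≤ W :=
  iSup₂_le_iff

variable {P : ℙ K V} {H W : Submodule K V} {B : Set (ℙ K V)}

theorem le_sup_spanPts_projection (hPH : IsCompl P.submodule H) (hWH : W ≤ H)
    {S : ℙ K V} (hSB : S ∈ B) (hSW : S.submodule ≤ P.submodule ⊔ W) :
    S.submodule ≤ P.submodule ⊔ spanPts K V (projection P H B ∩ ptsIn K V W) := by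
  by_cases hPS : P = S
  · exact hPS ▸ le_sup_left
  set Q := Projectivization.mk'' _ (Projectivization.finrank_sup_inf_of_isCompl hPH hPS)
  have hQ : Q.submodule = (P.submodule ⊔ S.submodule) ⊓ H :=
    Projectivization.submodule_mk'' _ _
  have hQW : Q.submodule ≤ W := by
    rw [hQ, ← sup_inf_eq_of_disjoint hPH.disjoint hWH]
    exact inf_le_inf_right _ (sup_le le_sup_left hSW)
  have hQproj : Q ∈ projection P H B ∩ ptsIn K V W := ⟨⟨S, hSB, hQ⟩, hQW⟩
  calc S.submodule ≤ P.submodule ⊔ S.submodule := le_sup_right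
    _ = P.submodule ⊔ Q.submodule := by rw [hQ, sup_sup_inf_eq_of_codisjoint hPH.codisjoint]
    _ ≤ _ := sup_le_sup_left (le_spanPts hQproj) _

theorem spanPts_projection_inter_ptsIn (hPH : IsCompl P.submodule H) (hWH : W ≤ H)
    (hspan : spanPts K V (B ∩ ptsIn K V (P.submodule ⊔ W)) = P.submodule ⊔ W) :
    spanPts K V (projection P H B ∩ ptsIn K V W) = W := by
  set T := spanPts K V (projection P H B ∩ ptsIn K V W)
  have hTW : T ≤ W := spanPts_le_iff.mpr fun Q hQ => hQ.2
  have hcone : P.submodule ⊔ W ≤ P.submodule ⊔ T := hspan ▸ spanPts_le_iff.mpr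
    fun S hS => le_sup_spanPts_projection hPH hWH hS.1 hS.2
  refine hTW.antisymm ?_
  calc W = (P.submodule ⊔ W) ⊓ H := (sup_inf_eq_of_disjoint hPH.disjoint hWH).symm
    _ ≤ (P.submodule ⊔ T) ⊓ H := inf_le_inf_right _ hcone
    _ = T := sup_inf_eq_of_disjoint hPH.disjoint (hTW.trans hWH)

end HP

theorem stmt_3_general (F : Type*) [Field F] (N k : ℕ) (hk : k ≤ N - 2)
    (B : Set (Projectivization F (Fin (N + 1) → F)))
    (hB : StrongBlock F (Fin (N + 1) → F) N k B)
    (Sg : Submodule F (Fin (N + 1) → F)) (hSg : finrank F Sg = N)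
    (P : Projectivization F (Fin (N + 1) → F))
    (hPSg : ¬ P.submodule ≤ Sg)
    (B' : Set (Projectivization F (Fin (N + 1) → F)))
    (hB' : B' = {Q | ∃ S ∈ B, Q.submodule = (P.submodule ⊔ S.submodule) ⊓ Sg}) :
    ∀ W : Submodule F (Fin (N + 1) → F), W ≤ Sg → finrank F W = (N - 1) - k + 1 →
      spanPts F (Fin (N + 1) → F) (B' ∩ ptsIn F (Fin (N + 1) → F) W) = W := by
  intro W hWSg hW
  have hPSg' : IsCompl P.submodule Sg :=
    Projectivization.isCompl_submodule_of_not_le P (by rw [hSg, finrank_fin_fun]) hPSg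
  subst hB'
  refine spanPts_projection_inter_ptsIn hPSg' hWSg (hB _ ?_)
  rw [Submodule.finrank_sup_of_disjoint (hPSg'.disjoint.mono_right hWSg),
    P.finrank_submodule, hW]
  have hWle : finrank F W ≤ finrank F Sg := Submodule.finrank_mono hWSg
  omega

/-- projecting a strong `k`-blocking set `B` of `PG(N,q)` from a point
`P ∉ B ∪ Sg` onto a hyperplane `Sg` yields a strong `k`-blocking set of `Sg ≅ PG(N-1,q)`. -/
theorem stmt_3 (F : Type*) [Field F] [Fintype F] (N k : ℕ) (hk : k ≤ N - 2)
    (B : Set (Projectivization F (Fin (N + 1) → F)))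
    (hB : StrongBlock F (Fin (N + 1) → F) N k B)
    (Sg : Submodule F (Fin (N + 1) → F)) (hSg : finrank F Sg = N)
    (P : Projectivization F (Fin (N + 1) → F))
    (hPB : P ∉ B) (hPSg : ¬ P.submodule ≤ Sg)
    (B' : Set (Projectivization F (Fin (N + 1) → F)))
    (hB' : B' = {Q | ∃ S ∈ B, Q.submodule = (P.submodule ⊔ S.submodule) ⊓ Sg}) :
    ∀ W : Submodule F (Fin (N + 1) → F), W ≤ Sg → finrank F W = (N - 1) - k + 1 →
      spanPts F (Fin (N + 1) → F) (B' ∩ ptsIn F (Fin (N + 1) → F) W) = W :=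
  stmt_3_general F N k hk B hB Sg hSg P hPSg B' hB'
end

section
/- Let K be a higgledy-piggledy set of k-subspaces of PG(N,q), Σ a hyperplane, and P a point not in Σ and not contained in any element of K. Then K' = { ⟨P,κ⟩ ∩ Σ : κ ∈ K } is a higgledy-piggledy set of k-subspaces of Σ ≅ PG(N−1,q) of size at most |K|. -/
open Module

open HP Submodule

/-! The projection from `P` onto `Σ` is the linear projection `π` onto `Σ` along the line `P`,
and `⟨P, κ⟩ ∩ Σ = π(κ)`; as `P ∉ κ`, `π` is injective on `κ`, so ranks are preserved.
For a subspace `W ≤ Σ` of the right rank, `⟨P, W⟩` is spanned by its points on elements of `K`;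
`π` maps `⟨P, W⟩` onto `W` and each such point either to `0` or to a point of `W` on some
`π(κ) ∈ K'`, so these points span `W`. -/

section Points

variable {F : Type*} [Field F] {V : Type*} [AddCommGroup V] [Module F V]

lemma Projectivization.disjoint_submodule_of_not_le_s4 {P : Projectivization F V}
    {U : Submodule F V} (h : ¬ P.submodule ≤ U) : Disjoint U P.submodule := by
  rw [P.submodule_eq, span_singleton_le_iff_mem] at h
  rw [P.submodule_eq]
  exact disjoint_span_singleton_of_notMem h

lemma Projectivization.finrank_submodule_sup [FiniteDimensional F V] {P : Projectivization F V}
    {U : Submodule F V} (h : ¬ P.submodule ≤ U) :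
    finrank F ↥(P.submodule ⊔ U) = finrank F U + 1 := by
  rw [P.submodule_eq, span_singleton_le_iff_mem] at h
  rw [P.submodule_eq, sup_comm, finrank_sup_span_singleton h]

lemma Projectivization.isCompl_submodule_of_finrank_add_one [FiniteDimensional F V]
    {P : Projectivization F V} {H : Submodule F V} (hH : finrank F H + 1 = finrank F V)
    (h : ¬ P.submodule ≤ H) : IsCompl H P.submodule :=
  (isCompl_iff_disjoint _ _ (by rw [P.finrank_submodule, hH])).mpr
    (disjoint_submodule_of_not_le_s4 h)

end Points

namespace HP

variable {F : Type*} [Field F] {V V' : Type*} [AddCommGroup V] [Module F V]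
  [AddCommGroup V'] [Module F V']

lemma spanPts_le {S : Set (Projectivization F V)} {W : Submodule F V} (h : S ⊆ ptsIn F V W) :
    spanPts F V S ≤ W :=
  iSup₂_le fun _ hQ => h hQ

lemma submodule_le_spanPts {S : Set (Projectivization F V)} {Q : Projectivization F V}
    (hQ : Q ∈ S) : Q.submodule ≤ spanPts F V S :=
  le_iSup₂ (f := fun P (_ : P ∈ S) => P.submodule) Q hQ

lemma map_spanPts_le (f : V →ₗ[F] V') {S : Set (Projectivization F V)}
    {T : Set (Projectivization F V')}
    (h : ∀ Q ∈ S, ∀ hQ : f Q.rep ≠ 0, Projectivization.mk F (f Q.rep) hQ ∈ T) :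
    (spanPts F V S).map f ≤ spanPts F V' T := by
  simp only [spanPts, Submodule.map_iSup]
  refine iSup₂_le fun Q hQ => ?_
  rw [Q.submodule_eq, map_span, Set.image_singleton]
  by_cases h0 : f Q.rep = 0
  · simp [h0]
  · rw [← Projectivization.submodule_mk _ h0]
    exact submodule_le_spanPts (h Q hQ h0)

lemma mk_apply_rep_mem_ptsIn_map (f : V →ₗ[F] V') {Q : Projectivization F V} {U : Submodule F V}
    (hQ : Q ∈ ptsIn F V U) (h0 : f Q.rep ≠ 0) :
    Projectivization.mk F (f Q.rep) h0 ∈ ptsIn F V' (U.map f) := by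
  rw [ptsIn, Set.mem_ofPred_eq, Projectivization.submodule_mk, span_singleton_le_iff_mem]
  exact mem_map_of_mem (hQ (Q.submodule_eq ▸ mem_span_singleton_self _))

lemma map_spanPts_iUnion_inter_le (f : V →ₗ[F] V') (K : Set (Submodule F V))
    (W : Submodule F V) :
    (spanPts F V ((⋃ κ ∈ K, ptsIn F V κ) ∩ ptsIn F V W)).map f ≤
      spanPts F V' ((⋃ κ' ∈ map f '' K, ptsIn F V' κ') ∩ ptsIn F V' (W.map f)) := by
  refine map_spanPts_le f fun Q ⟨hQK, hQW⟩ h0 => ⟨?_, mk_apply_rep_mem_ptsIn_map f hQW h0⟩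
  obtain ⟨κ, hκ, hQκ⟩ := Set.mem_iUnion₂.mp hQK
  exact Set.mem_iUnion₂.mpr ⟨_, Set.mem_image_of_mem _ hκ, mk_apply_rep_mem_ptsIn_map f hQκ h0⟩

end HP

namespace Submodule

variable {F : Type*} [Field F] {V : Type*} [AddCommGroup V] [Module F V]
  {H p : Submodule F V} (hc : IsCompl H p)

lemma map_projection_eq_sup_inf (U : Submodule F V) :
    U.map (H.projection p hc) = (p ⊔ U) ⊓ H := by
  apply le_antisymm
  · rintro _ ⟨x, hx, rfl⟩
    refine ⟨?_, projection_apply_mem hc x⟩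
    rw [← sub_sub_cancel x (H.projection p hc x)]
    exact sub_mem (mem_sup_right hx) (mem_sup_left (sub_projection_mem hc x))
  · rintro y ⟨hy, hyH⟩
    obtain ⟨a, ha, u, hu, rfl⟩ := mem_sup.mp hy
    refine ⟨u, hu, ?_⟩
    calc H.projection p hc u = H.projection p hc (a + u) := by
          rw [map_add, projection_apply_of_mem_right hc ha, zero_add]
      _ = a + u := projection_apply_of_mem_left hc hyH

lemma map_projection_sup_of_le {W : Submodule F V} (hW : W ≤ H) :
    (p ⊔ W).map (H.projection p hc) = W := by
  rw [map_projection_eq_sup_inf, ← sup_assoc, sup_idem, sup_comm, sup_inf_assoc_of_le _ hW,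
    hc.symm.inf_eq_bot, sup_bot_eq]

lemma finrank_map_projection {U : Submodule F V} (hU : Disjoint U p) :
    finrank F (U.map (H.projection p hc)) = finrank F U := by
  rw [← LinearMap.range_domRestrict]
  exact LinearMap.finrank_range_of_inj (LinearMap.injective_domRestrict_iff.mpr (by rwa [ker_projection]))

end Submodule

/-- projecting a higgledy-piggledy set `K` of `k`-subspaces of `PG(N,q)`
from a point `P` (outside the hyperplane `Sg` and outside every element of `K`) onto `Sg`
yields a higgledy-piggledy set of `k`-subspaces of `Sg ≅ PG(N-1,q)` of size at most `|K|`. -/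
theorem stmt_4 (F : Type*) [Field F] [Fintype F] (N k : ℕ) (hk : k ≤ N - 2)
    (K : Set (Submodule F (Fin (N + 1) → F)))
    (hdim : ∀ κ ∈ K, finrank F κ = k + 1)
    (hK : StrongBlock F (Fin (N + 1) → F) N k (⋃ κ ∈ K, ptsIn F (Fin (N + 1) → F) κ))
    (Sg : Submodule F (Fin (N + 1) → F)) (hSg : finrank F Sg = N)
    (P : Projectivization F (Fin (N + 1) → F))
    (hPSg : ¬ P.submodule ≤ Sg) (hPK : ∀ κ ∈ K, ¬ P.submodule ≤ κ)
    (K' : Set (Submodule F (Fin (N + 1) → F)))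
    (hK' : K' = {κ' | ∃ κ ∈ K, κ' = (P.submodule ⊔ κ) ⊓ Sg}) :
    (∀ κ' ∈ K', κ' ≤ Sg ∧ finrank F κ' = k + 1) ∧
    (∀ W : Submodule F (Fin (N + 1) → F), W ≤ Sg → finrank F W = (N - 1) - k + 1 →
      spanPts F (Fin (N + 1) → F)
        ((⋃ κ' ∈ K', ptsIn F (Fin (N + 1) → F) κ') ∩ ptsIn F (Fin (N + 1) → F) W) = W) ∧
    K'.ncard ≤ K.ncard := by
  have hc : IsCompl Sg P.submodule :=
    P.isCompl_submodule_of_finrank_add_one (by rw [hSg, finrank_fin_fun]) hPSg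
  set π := Sg.projection P.submodule hc
  have hK'π : K' = map π '' K := by
    rw [hK']
    ext κ'
    simp only [Set.mem_ofPred_eq, Set.mem_image, π, map_projection_eq_sup_inf hc, eq_comm]
  refine ⟨?_, fun W hWSg hW => ?_, hK'π ▸ Set.ncard_image_le K.toFinite⟩
  · rw [hK']
    rintro _ ⟨κ, hκ, rfl⟩
    refine ⟨inf_le_right, ?_⟩
    rw [← map_projection_eq_sup_inf hc,
      finrank_map_projection hc (Projectivization.disjoint_submodule_of_not_le_s4 (hPK κ hκ)),
      hdim κ hκ]
  · have hPW : finrank F ↥(P.submodule ⊔ W) = N - k + 1 := by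
      rw [P.finrank_submodule_sup fun h => hPSg (h.trans hWSg), hW]
      have := finrank_mono hWSg
      omega
    refine le_antisymm (spanPts_le Set.inter_subset_right) ?_
    calc W = (P.submodule ⊔ W).map π := (map_projection_sup_of_le hc hWSg).symm
      _ = (spanPts F _ ((⋃ κ ∈ K, ptsIn F _ κ) ∩ ptsIn F _ (P.submodule ⊔ W))).map π := by
          rw [hK _ hPW]
      _ ≤ _ := map_spanPts_iUnion_inter_le π K _
      _ = _ := by rw [← hK'π, map_projection_sup_of_le hc hWSg]
end

section
/- Suppose L is a higgledy-piggledy set of lines of PG(N,q) with |L| = N + ⌊N/2⌋ ≤ q. Then every ⌈(N+1)/2⌉ lines of L together span the whole space PG(N,q). -/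
/-
Suppose the span of `⌈(N+1)/2⌉` lines of `L` lies in a hyperplane `H`. Each of the remaining
`N - 1` lines meets `H` in a point, and these points together lie in an `(N-2)`-space `T ⊂ H`,
which then meets every line of `L` (those inside `H` for dimension reasons). The hyperplanes
through `T` are the `q + 1` points of the projective line `V ⧸ T`, while each line of `L` spans
at most one of them together with `T`. As `|L| ≤ q`, some hyperplane `K ⊃ T` meets every line
of `L` only inside `T`, so the points of `L` in `K` span at most `T`: `L` is not
higgledy-piggledy.
-/

open Module

open HP
open scoped LinearAlgebra.Projectivization

namespace Submodule

variable {F V : Type*} [Field F] [AddCommGroup V] [Module F V] [FiniteDimensional F V]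

theorem finrank_map_mkQ_add_finrank_inf (T W : Submodule F V) :
    finrank F (W.map T.mkQ) + finrank F ↥(W ⊓ T) = finrank F W := by
  have := LinearMap.finrank_range_add_finrank_ker (T.mkQ.domRestrict W)
  rwa [LinearMap.range_domRestrict, LinearMap.ker_domRestrict, ker_mkQ,
    ← finrank_map_subtype_eq, map_comap_subtype] at this

theorem finrank_comap_mkQ (T : Submodule F V) (S : Submodule F (V ⧸ T)) :
    finrank F (S.comap T.mkQ) = finrank F S + finrank F T := by
  have hT : S.comap T.mkQ ⊓ T = T :=
    inf_eq_right.mpr fun x hx => by simp [(Quotient.mk_eq_zero T).mpr hx]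
  rw [← finrank_map_mkQ_add_finrank_inf T, map_comap_eq_of_surjective T.mkQ_surjective, hT]

theorem inf_ne_bot_of_finrank_lt {ℓ T H : Submodule F V} (hℓ : ℓ ≤ H) (hT : T ≤ H)
    (h : finrank F H < finrank F ℓ + finrank F T) : ℓ ⊓ T ≠ ⊥ := by
  intro hbot
  have hsum := finrank_sup_add_finrank_inf_eq ℓ T
  have hsup := finrank_mono (sup_le hℓ hT)
  rw [hbot, finrank_bot] at hsum
  omega

theorem exists_le_le_finrank_eq {W H : Submodule F V} (hWH : W ≤ H) {k : ℕ}
    (hWk : finrank F W ≤ k) (hkH : k ≤ finrank F H) :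
    ∃ T, W ≤ T ∧ T ≤ H ∧ finrank F T = k := by
  induction k, hWk using Nat.le_induction with
  | base => exact ⟨W, le_rfl, hWH, rfl⟩
  | succ k _ ih =>
    obtain ⟨T, hWT, hTH, hT⟩ := ih (by omega)
    obtain ⟨x, hxH, hxT⟩ := SetLike.not_le_iff_exists.mp fun hHT : H ≤ T => by
      have := finrank_mono hHT
      omega
    refine ⟨T ⊔ span F {x}, hWT.trans le_sup_left, sup_le hTH (span_le.mpr (by simpa)), ?_⟩
    rw [finrank_sup_span_singleton hxT, hT]

theorem exists_inf_ne_bot_of_iSup_ne_top {n : ℕ} (hV : finrank F V = n + 2)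
    {L L' : Set (Submodule F V)} (hLfin : L.Finite) (hdim : ∀ ℓ ∈ L, 2 ≤ finrank F ℓ)
    (hspan : (⨆ ℓ ∈ L', ℓ) ≠ ⊤) (hcard : (L \ L').ncard ≤ n) :
    ∃ T : Submodule F V, finrank F T = n ∧ ∀ ℓ ∈ L, ℓ ⊓ T ≠ ⊥ := by
  obtain ⟨H, hL'H, -, hH⟩ := exists_le_le_finrank_eq (le_top : (⨆ ℓ ∈ L', ℓ) ≤ ⊤) (k := n + 1)
    (by have := finrank_lt hspan; omega) (by rw [finrank_top]; omega)
  have hpoint : ∀ ℓ ∈ L \ L', ∃ x ∈ ℓ ⊓ H, x ≠ 0 := fun ℓ hℓ =>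
    (Submodule.ne_bot_iff _).mp <| inf_ne_bot_of_finrank_lt le_top le_top <| by
      rw [finrank_top]; have := hdim ℓ hℓ.1; omega
  choose! x hxH hx0 using hpoint
  have : Fintype ↑(x '' (L \ L')) := (hLfin.sdiff.image x).fintype
  have hxrank : finrank F (span F (x '' (L \ L'))) ≤ n := by
    refine (finrank_span_le_card _).trans ?_
    rw [← Set.ncard_eq_toFinset_card']
    exact (Set.ncard_image_le hLfin.sdiff).trans hcard
  obtain ⟨T, hxT, hTH, hT⟩ := exists_le_le_finrank_eq
    (span_le.mpr (Set.image_subset_iff.mpr fun ℓ hℓ => (hxH ℓ hℓ).2)) hxrank (by omega)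
  refine ⟨T, hT, fun ℓ hℓ => ?_⟩
  by_cases hℓ' : ℓ ∈ L'
  · exact inf_ne_bot_of_finrank_lt ((le_biSup id hℓ').trans hL'H) hTH
      (by have := hdim ℓ hℓ; omega)
  · have hℓ'' : ℓ ∈ L \ L' := ⟨hℓ, hℓ'⟩
    exact (Submodule.ne_bot_iff _).mpr
      ⟨x ℓ, ⟨(hxH ℓ hℓ'').1, hxT (subset_span ⟨ℓ, hℓ'', rfl⟩)⟩, hx0 ℓ hℓ''⟩

end Submodule

namespace Projectivization

variable {F Q : Type*} [Field F] [AddCommGroup Q] [Module F Q] [FiniteDimensional F Q]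

theorem exists_forall_not_submodule_le {M : Set (Submodule F Q)} (hM : M.Finite)
    (hrank : ∀ m ∈ M, finrank F m ≤ 1) (hcard : M.ncard < Nat.card (ℙ F Q)) :
    ∃ p : ℙ F Q, ∀ m ∈ M, ¬ p.submodule ≤ m := by
  by_contra! h
  have hrange : Set.range (Projectivization.submodule : ℙ F Q → Submodule F Q) ⊆ M := by
    rintro _ ⟨p, rfl⟩
    obtain ⟨m, hm, hpm⟩ := h p
    rwa [Submodule.eq_of_le_of_finrank_le hpm (by rw [finrank_submodule]; exact hrank m hm)]
  have := Set.ncard_le_ncard hrange hM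
  rw [Set.ncard_range_of_injective submodule_injective] at this
  omega

end Projectivization

namespace HP

variable {F V : Type*} [Field F] [Finite F] [AddCommGroup V] [Module F V] [FiniteDimensional F V]

/-- The hyperplanes through `T` are the points of the projective line `V ⧸ T`; a subspace `ℓ`
meeting one of them outside `T` is mapped onto that point. -/
theorem exists_hyperplane_inf_le {T : Submodule F V} (hT : finrank F (V ⧸ T) = 2)
    {L : Set (Submodule F V)} (hLfin : L.Finite) (hcard : L.ncard ≤ Nat.card F)
    (hL : ∀ ℓ ∈ L, finrank F (ℓ.map T.mkQ) ≤ 1) :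
    ∃ K : Submodule F V, finrank F K = finrank F T + 1 ∧ ∀ ℓ ∈ L, ℓ ⊓ K ≤ T := by
  obtain ⟨p, hp⟩ := Projectivization.exists_forall_not_submodule_le (hLfin.image (·.map T.mkQ))
    (by simpa using hL) (by
      rw [Projectivization.card_of_finrank_two F _ hT]
      exact (Set.ncard_image_le hLfin).trans_lt (by omega))
  refine ⟨p.submodule.comap T.mkQ, ?_, fun ℓ hℓ x ⟨hxℓ, hxK⟩ => ?_⟩
  · rw [Submodule.finrank_comap_mkQ, p.finrank_submodule, add_comm]
  by_contra hxT
  have hx0 : T.mkQ x ≠ 0 := by simpa [Submodule.Quotient.mk_eq_zero] using hxT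
  refine hp _ ⟨ℓ, hℓ, rfl⟩ ?_
  rw [eq_span_singleton_of_mem_of_finrank_eq_one p.finrank_submodule hxK hx0,
    Submodule.span_singleton_le_iff_mem]
  exact Submodule.mem_map_of_mem hxℓ

theorem not_strongBlock_of_forall_inf_ne_bot {L : Set (Submodule F V)} (hLfin : L.Finite)
    (hcard : L.ncard ≤ Nat.card F) (hdim : ∀ ℓ ∈ L, finrank F ℓ ≤ 2) {T : Submodule F V}
    (hT : finrank F T + 2 = finrank F V) (hmeet : ∀ ℓ ∈ L, ℓ ⊓ T ≠ ⊥) :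
    ¬ StrongBlock F V (finrank F T + 1) 1 (⋃ ℓ ∈ L, ptsIn F V ℓ) := by
  intro hblock
  have hQ : finrank F (V ⧸ T) = 2 := by
    have := T.finrank_quotient_add_finrank
    omega
  obtain ⟨K, hK, hKT⟩ := exists_hyperplane_inf_le hQ hLfin hcard fun ℓ hℓ => by
    have := T.finrank_map_mkQ_add_finrank_inf ℓ
    have := Nat.pos_of_ne_zero fun h => hmeet ℓ hℓ (Submodule.finrank_eq_zero.mp h)
    have := hdim ℓ hℓ
    omega
  have hspan : spanPts F V ((⋃ ℓ ∈ L, ptsIn F V ℓ) ∩ ptsIn F V K) ≤ T := by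
    refine iSup₂_le fun P ⟨hPL, hPK⟩ => ?_
    obtain ⟨ℓ, hℓ, hPℓ⟩ := Set.mem_iUnion₂.mp hPL
    exact (le_inf hPℓ hPK).trans (hKT ℓ hℓ)
  rw [hblock K (by omega)] at hspan
  have := Submodule.finrank_mono hspan
  omega

end HP

/-- if `L` is a higgledy-piggledy set of lines of `PG(N,q)` with
`|L| = N + ⌊N/2⌋ ≤ q`, then every `⌈(N+1)/2⌉` lines of `L` span the whole space. -/
theorem stmt_6 (F : Type*) [Field F] [Fintype F] (N : ℕ) (hN : 1 ≤ N)
    (L : Set (Submodule F (Fin (N + 1) → F)))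
    (hdim : ∀ ℓ ∈ L, finrank F ℓ = 2)
    (hL : StrongBlock F (Fin (N + 1) → F) N 1 (⋃ ℓ ∈ L, ptsIn F (Fin (N + 1) → F) ℓ))
    (hcard : L.ncard = N + N / 2) (hq : N + N / 2 ≤ Fintype.card F) :
    ∀ L' ⊆ L, L'.ncard = (N + 2) / 2 → (⨆ ℓ ∈ L', ℓ) = ⊤ := by
  intro L' hL' hcard'
  by_contra hspan
  obtain ⟨n, rfl⟩ : ∃ n, N = n + 1 := ⟨N - 1, by omega⟩
  have hLfin : L.Finite := Set.finite_of_ncard_pos (by omega)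
  have hV : finrank F (Fin (n + 1 + 1) → F) = n + 2 := Module.finrank_fin_fun F
  obtain ⟨T, hT, hmeet⟩ := Submodule.exists_inf_ne_bot_of_iSup_ne_top hV hLfin
    (fun ℓ hℓ => (hdim ℓ hℓ).ge) hspan
    (by rw [Set.ncard_sdiff hL' (hLfin.subset hL')]; omega)
  refine not_strongBlock_of_forall_inf_ne_bot hLfin (by rw [Nat.card_eq_fintype_card]; omega)
    (fun ℓ hℓ => (hdim ℓ hℓ).le) (by rw [hT, hV]) hmeet ?_
  rwa [hT]
end

section
/- Suppose L is a higgledy-piggledy set of lines of PG(N,q) with |L| = N + N/2 ≤ q, where N ≥ 4 is even. Then there is at most one pair of intersecting lines in L; that is, one cannot find two distinct (unordered) pairs of lines of L each of which intersects. -/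
open Module

open HP

/-!
Two distinct intersecting pairs of lines give either three lines `a, b, c` with `a` meeting `b`
and `c`, or four lines with `a` meeting `b` and `c` meeting `d`. In both cases these lines lie in
a subspace `S` of rank at most `4`, except for lines through a point `p ≤ S` (none for three
lines, `p = c ⊓ d` for four). With `N = 2n`, adding `n - 2` further lines to `S` spans at most a
hyperplane `H`; each of the remaining lines not in `H` meets `H` in a point, and these at most
`2n - 1` points (`2n - 2` for four lines) together with `p` span a proper subspace of `H`. Any
`(N-2)`-space of `H` through it meets every line of `L`, which is impossible for a
higgledy-piggledy set of `|L| ≤ q` lines: one of the `q + 1` hyperplanes through that space is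
not spanned by it and a line, and such a hyperplane meets the lines only inside the
`(N-2)`-space.
-/

open Submodule
open scoped LinearAlgebra.Projectivization

namespace HP

section

variable {F V : Type*} [Field F] [AddCommGroup V] [Module F V]

theorem spanPts_iUnion_inter_ptsIn_le {L : Set (Submodule F V)} {H W : Submodule F V}
    (h : ∀ ℓ ∈ L, ℓ ⊓ H ≤ W) : spanPts F V ((⋃ ℓ ∈ L, ptsIn F V ℓ) ∩ ptsIn F V H) ≤ W := by
  refine iSup₂_le fun P ⟨hPL, hPH⟩ => ?_
  obtain ⟨ℓ, hℓ, hPℓ⟩ := Set.mem_iUnion₂.mp hPL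
  exact (le_inf hPℓ hPH).trans (h ℓ hℓ)

end

section

variable {F V : Type*} [Field F] [AddCommGroup V] [Module F V] [FiniteDimensional F V]

theorem inf_ne_bot_of_finrank_lt_add_s8 {K p q : Submodule F V} (hp : p ≤ K) (hq : q ≤ K)
    (h : finrank F K < finrank F p + finrank F q) : p ⊓ q ≠ ⊥ := by
  intro hpq
  have hsum := finrank_sup_add_finrank_inf_eq p q
  have hle := finrank_mono (sup_le hp hq)
  rw [hpq, finrank_bot] at hsum
  omega

theorem finrank_sup_add_one_le {p q : Submodule F V} (h : p ⊓ q ≠ ⊥) :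
    finrank F ↥(p ⊔ q) + 1 ≤ finrank F p + finrank F q := by
  have := finrank_sup_add_finrank_inf_eq p q
  have := one_le_finrank_iff.mpr h
  omega

theorem finrank_inf_lt_of_not_le {p q : Submodule F V} (h : ¬p ≤ q) :
    finrank F ↥(p ⊓ q) < finrank F p :=
  finrank_lt_finrank_of_lt (inf_lt_left.mpr h)

theorem exists_finrank_eq_of_le {W K : Submodule F V} (hWK : W ≤ K) {k : ℕ}
    (hW : finrank F W ≤ k) (hK : k ≤ finrank F K) :
    ∃ H, W ≤ H ∧ H ≤ K ∧ finrank F H = k := by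
  obtain ⟨d, rfl⟩ := Nat.exists_eq_add_of_le hW
  clear hW
  induction d generalizing W with
  | zero => exact ⟨W, le_rfl, hWK, rfl⟩
  | succ d ih =>
    obtain ⟨x, hxK, hxW⟩ := SetLike.exists_of_lt (lt_of_le_of_ne hWK (by rintro rfl; omega))
    have hrank := finrank_sup_span_singleton hxW
    obtain ⟨H, hWH, hHK, hH⟩ :=
      ih (sup_le hWK ((span_singleton_le_iff_mem x K).mpr hxK)) (by omega)
    exact ⟨H, le_sup_left.trans hWH, hHK, by omega⟩

theorem finrank_biSup_le {ι : Type*} {s : Set ι} (hs : s.Finite) (f : ι → Submodule F V)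
    {c : ℕ} (h : ∀ i ∈ s, finrank F (f i) ≤ c) : finrank F ↥(⨆ i ∈ s, f i) ≤ c * s.ncard := by
  induction s, hs using Set.Finite.induction_on with
  | empty => simp
  | @insert a s ha hs ih =>
    rw [iSup_insert, Set.ncard_insert_of_notMem ha hs, mul_add_one]
    have hsup := finrank_add_le_finrank_add_finrank (f a) (⨆ i ∈ s, f i)
    have ha := h a (Set.mem_insert a s)
    have hs := ih fun i hi => h i (Set.mem_insert_of_mem a hi)
    omega

/-- The hyperplanes through `Λ` are the preimages of the `q + 1` points of the projective line
`ℙ (V ⧸ Λ)`. -/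
theorem exists_hyperplane_ge_notMem [Finite F] {Λ : Submodule F V}
    (hΛ : finrank F Λ + 2 = finrank F V) {B : Set (Submodule F V)} (hB : B.Finite)
    (hBq : B.ncard ≤ Nat.card F) : ∃ H, Λ ≤ H ∧ finrank F H + 1 = finrank F V ∧ H ∉ B := by
  let pencil : ℙ F (V ⧸ Λ) → Submodule F V := fun P => P.submodule.comap Λ.mkQ
  have hinj : Function.Injective pencil :=
    (comap_injective_of_surjective Λ.mkQ_surjective).comp Projectivization.submodule_injective
  have hcard : Nat.card (ℙ F (V ⧸ Λ)) = Nat.card F + 1 :=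
    Projectivization.card_of_finrank_two F _ (by have := Λ.finrank_quotient_add_finrank; omega)
  obtain ⟨P, hP⟩ : ∃ P, pencil P ∉ B := by
    by_contra! h
    have := Set.ncard_le_ncard (Set.range_subset_iff.mpr h) hB
    rw [Set.ncard_range_of_injective hinj, hcard] at this
    omega
  obtain ⟨v, hv⟩ := Λ.mkQ_surjective P.rep
  have hvΛ : v ∉ Λ := by
    rw [← Quotient.mk_eq_zero Λ, ← mkQ_apply, hv]
    exact P.rep_nonzero
  have hpencil : pencil P = Λ ⊔ F ∙ v := by
    rw [← comap_map_mkQ, map_span, Set.image_singleton, hv,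
      ← Projectivization.submodule_mk _ P.rep_nonzero, Projectivization.mk_rep]
  refine ⟨pencil P, hpencil ▸ le_sup_left, ?_, hP⟩
  rw [hpencil, finrank_sup_span_singleton hvΛ]
  omega

theorem inf_le_of_sup_ne {ℓ Λ H : Submodule F V} (hℓ : finrank F ℓ = 2) (hΛH : Λ ≤ H)
    (hH : finrank F Λ + 1 = finrank F H) (hmeet : ℓ ⊓ Λ ≠ ⊥) (hne : Λ ⊔ ℓ ≠ H) :
    ℓ ⊓ H ≤ Λ := by
  have hsup := finrank_sup_add_one_le (inf_comm ℓ Λ ▸ hmeet)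
  by_cases hℓH : ℓ ≤ H
  · refine inf_le_left.trans (not_not.mp fun hℓΛ => hne ?_)
    have hlt := finrank_lt_finrank_of_lt (left_lt_sup.mpr hℓΛ)
    exact eq_of_le_of_finrank_le (sup_le hΛH hℓH) (by omega)
  · have hlt := finrank_inf_lt_of_not_le hℓH
    have hone := one_le_finrank_iff.mpr hmeet
    have heq : ℓ ⊓ Λ = ℓ ⊓ H :=
      eq_of_le_of_finrank_le (inf_le_inf_left ℓ hΛH) (by omega)
    exact heq ▸ inf_le_right

theorem StrongBlock.exists_inf_eq_bot [Finite F] {N : ℕ} (hV : finrank F V = N + 1)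
    {L : Set (Submodule F V)} (hLfin : L.Finite) (hdim : ∀ ℓ ∈ L, finrank F ℓ = 2)
    (hL : StrongBlock F V N 1 (⋃ ℓ ∈ L, ptsIn F V ℓ)) (hq : L.ncard ≤ Nat.card F)
    {Λ : Submodule F V} (hΛ : finrank F Λ + 1 = N) : ∃ ℓ ∈ L, ℓ ⊓ Λ = ⊥ := by
  by_contra! hmeet
  obtain ⟨H, hΛH, hH, hHL⟩ := exists_hyperplane_ge_notMem (Λ := Λ) (by rw [hV]; omega)
    (hLfin.image (Λ ⊔ ·)) ((Set.ncard_image_le hLfin).trans hq)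
  have hspan : spanPts F V ((⋃ ℓ ∈ L, ptsIn F V ℓ) ∩ ptsIn F V H) ≤ Λ :=
    spanPts_iUnion_inter_ptsIn_le fun ℓ hℓ =>
      inf_le_of_sup_ne (hdim ℓ hℓ) hΛH (by omega) (hmeet ℓ hℓ) fun h => hHL ⟨ℓ, hℓ, h⟩
  rw [hL H (by omega)] at hspan
  have := finrank_mono hspan
  omega

theorem exists_meeting_of_hyperplane_cover {N : ℕ} {L : Set (Submodule F V)}
    (hdim : ∀ ℓ ∈ L, finrank F ℓ = 2) {H U : Submodule F V} (hH : finrank F H = N)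
    (hUH : U ≤ H) (hU : finrank F U + 1 ≤ N) (hcov : ∀ ℓ ∈ L, ℓ ≤ H ∨ ℓ ⊓ U ≠ ⊥) :
    ∃ Λ : Submodule F V, finrank F Λ + 1 = N ∧ ∀ ℓ ∈ L, ℓ ⊓ Λ ≠ ⊥ := by
  obtain ⟨Λ, hUΛ, hΛH, hΛ⟩ := exists_finrank_eq_of_le hUH (k := N - 1) (by omega) (by omega)
  refine ⟨Λ, by omega, fun ℓ hℓ => ?_⟩
  rcases hcov ℓ hℓ with hℓH | hℓU
  · exact inf_ne_bot_of_finrank_lt_add_s8 hℓH hΛH (by rw [hdim ℓ hℓ]; omega)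
  · exact ne_bot_of_le_ne_bot hℓU (inf_le_inf_left ℓ hUΛ)

theorem exists_meeting_of_core {N : ℕ} (hV : finrank F V = N + 1) {L T : Set (Submodule F V)}
    (hLfin : L.Finite) (hdim : ∀ ℓ ∈ L, finrank F ℓ = 2) {S p : Submodule F V} (hpS : p ≤ S)
    (hT : ∀ ℓ ∈ T, ℓ ≤ S ∨ ℓ ⊓ p ≠ ⊥) {k : ℕ} (hk : k ≤ (L \ T).ncard)
    (hS : finrank F S + 2 * k ≤ N) (hp : finrank F p + ((L \ T).ncard - k) + 1 ≤ N) :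
    ∃ Λ : Submodule F V, finrank F Λ + 1 = N ∧ ∀ ℓ ∈ L, ℓ ⊓ Λ ≠ ⊥ := by
  obtain ⟨E, hE, hEk⟩ := Set.exists_subset_card_eq hk
  have hEfin : E.Finite := hLfin.sdiff.subset hE
  have hSE : finrank F ↥(S ⊔ ⨆ ℓ ∈ E, ℓ) ≤ N := by
    have := finrank_add_le_finrank_add_finrank S (⨆ ℓ ∈ E, ℓ)
    have := finrank_biSup_le hEfin (fun ℓ => ℓ) fun ℓ hℓ => (hdim ℓ (hE hℓ).1).le
    omega
  obtain ⟨H, hSEH, -, hH⟩ := exists_finrank_eq_of_le le_top hSE (by rw [finrank_top]; omega)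
  set R := {ℓ ∈ L \ T | ¬ℓ ≤ H}
  have hRE : R ⊆ (L \ T) \ E := fun ℓ hℓ =>
    ⟨hℓ.1, fun hℓE => hℓ.2 ((le_biSup id hℓE).trans (le_sup_right.trans hSEH))⟩
  have hR : R.ncard ≤ (L \ T).ncard - k := by
    rw [← hEk, ← Set.ncard_sdiff hE hEfin]
    exact Set.ncard_le_ncard hRE hLfin.sdiff.sdiff
  refine exists_meeting_of_hyperplane_cover hdim hH (U := p ⊔ ⨆ ℓ ∈ R, ℓ ⊓ H)
    (sup_le (hpS.trans (le_sup_left.trans hSEH)) (iSup₂_le fun ℓ _ => inf_le_right)) ?_ ?_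
  · have := finrank_add_le_finrank_add_finrank p (⨆ ℓ ∈ R, ℓ ⊓ H)
    have hRfin : R.Finite := hLfin.sdiff.subset (Set.sep_subset _ _)
    have : finrank F ↥(⨆ ℓ ∈ R, ℓ ⊓ H) ≤ 1 * R.ncard := finrank_biSup_le hRfin _
      fun ℓ hℓ => by have := finrank_inf_lt_of_not_le hℓ.2; rw [hdim ℓ hℓ.1.1] at this; omega
    omega
  intro ℓ hℓ
  refine or_iff_not_imp_left.mpr fun hℓH => ?_
  by_cases hℓT : ℓ ∈ T
  · have hℓp := (hT ℓ hℓT).resolve_left fun hℓS => hℓH (hℓS.trans (le_sup_left.trans hSEH))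
    exact ne_bot_of_le_ne_bot hℓp (inf_le_inf_left ℓ le_sup_left)
  · have hmeet : ℓ ⊓ H ≠ ⊥ := inf_ne_bot_of_finrank_lt_add_s8 le_top le_top
      (by rw [finrank_top, hdim ℓ hℓ, hH, hV]; omega)
    have hℓR : ℓ ∈ R := ⟨⟨hℓ, hℓT⟩, hℓH⟩
    exact ne_bot_of_le_ne_bot hmeet
      (le_inf inf_le_left ((le_biSup (· ⊓ H) hℓR).trans le_sup_right))

theorem StrongBlock.false_of_core [Finite F] {N : ℕ} (hN : 4 ≤ N) (heven : Even N)
    (hV : finrank F V = N + 1) {L : Set (Submodule F V)} (hdim : ∀ ℓ ∈ L, finrank F ℓ = 2)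
    (hL : StrongBlock F V N 1 (⋃ ℓ ∈ L, ptsIn F V ℓ)) (hcard : L.ncard = N + N / 2)
    (hq : N + N / 2 ≤ Nat.card F) {T : Set (Submodule F V)} (hTL : T ⊆ L)
    {S p : Submodule F V} (hpS : p ≤ S) (hT : ∀ ℓ ∈ T, ℓ ≤ S ∨ ℓ ⊓ p ≠ ⊥)
    (hS : finrank F S ≤ 4) (hT4 : T.ncard ≤ 4) (hTp : finrank F p + 3 ≤ T.ncard) : False := by
  obtain ⟨n, rfl⟩ := heven
  have hLfin : L.Finite := Set.finite_of_ncard_pos (by omega)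
  have hLT : (L \ T).ncard = L.ncard - T.ncard := Set.ncard_sdiff hTL (hLfin.subset hTL)
  obtain ⟨Λ, hΛ, hmeet⟩ := exists_meeting_of_core hV hLfin hdim hpS hT (k := n - 2)
    (by omega) (by omega) (by omega)
  obtain ⟨ℓ, hℓ, hℓΛ⟩ := hL.exists_inf_eq_bot hV hLfin hdim (by omega) hΛ
  exact hmeet ℓ hℓ hℓΛ

theorem finrank_sup_sup_le_of_inf_ne_bot {a b c : Submodule F V} (ha : finrank F a = 2)
    (hb : finrank F b = 2) (hc : finrank F c = 2) (hab : a ⊓ b ≠ ⊥) (hac : a ⊓ c ≠ ⊥) :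
    finrank F ↥(a ⊔ b ⊔ c) ≤ 4 := by
  have habc : (a ⊔ b) ⊓ c ≠ ⊥ := ne_bot_of_le_ne_bot hac (inf_le_inf_right c le_sup_left)
  have := finrank_sup_add_one_le hab
  have := finrank_sup_add_one_le habc
  omega

theorem finrank_inf_le_one_of_ne {c d : Submodule F V} (hc : finrank F c = 2)
    (hd : finrank F d = 2) (hcd : c ≠ d) : finrank F ↥(c ⊓ d) ≤ 1 := by
  have := finrank_inf_lt_of_not_le fun h => hcd (eq_of_le_of_finrank_eq h (hc.trans hd.symm))
  omega

theorem finrank_sup_sup_inf_le_of_inf_ne_bot {a b c d : Submodule F V} (ha : finrank F a = 2)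
    (hb : finrank F b = 2) (hc : finrank F c = 2) (hd : finrank F d = 2) (hab : a ⊓ b ≠ ⊥)
    (hcd : c ≠ d) : finrank F ↥(a ⊔ b ⊔ c ⊓ d) ≤ 4 := by
  have := finrank_inf_le_one_of_ne hc hd hcd
  have := finrank_sup_add_one_le hab
  have := finrank_add_le_finrank_add_finrank (a ⊔ b) (c ⊓ d)
  omega

theorem StrongBlock.false_of_three_lines [Finite F] {N : ℕ} (hN : 4 ≤ N) (heven : Even N)
    (hV : finrank F V = N + 1) {L : Set (Submodule F V)} (hdim : ∀ ℓ ∈ L, finrank F ℓ = 2)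
    (hL : StrongBlock F V N 1 (⋃ ℓ ∈ L, ptsIn F V ℓ)) (hcard : L.ncard = N + N / 2)
    (hq : N + N / 2 ≤ Nat.card F) :
    ∀ ⦃a b c : Submodule F V⦄, a ∈ L → b ∈ L → c ∈ L → a ≠ b → a ≠ c → b ≠ c →
      a ⊓ b ≠ ⊥ → a ⊓ c ≠ ⊥ → False := by
  intro a b c ha hb hc hab hac hbc hiab hiac
  have hT : ({a, b, c} : Set (Submodule F V)).ncard = 3 :=
    Set.ncard_eq_three.mpr ⟨a, b, c, hab, hac, hbc, rfl⟩
  refine hL.false_of_core hN heven hV hdim hcard hq (T := {a, b, c}) (S := a ⊔ b ⊔ c)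
    (by rintro ℓ (rfl | rfl | rfl) <;> assumption) bot_le ?_
    (finrank_sup_sup_le_of_inf_ne_bot (hdim a ha) (hdim b hb) (hdim c hc) hiab hiac)
    (by omega) (by rw [finrank_bot]; omega)
  rintro ℓ (rfl | rfl | rfl)
  · exact Or.inl (le_sup_left.trans le_sup_left)
  · exact Or.inl (le_sup_right.trans le_sup_left)
  · exact Or.inl le_sup_right

theorem StrongBlock.false_of_four_lines [Finite F] {N : ℕ} (hN : 4 ≤ N) (heven : Even N)
    (hV : finrank F V = N + 1) {L : Set (Submodule F V)} (hdim : ∀ ℓ ∈ L, finrank F ℓ = 2)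
    (hL : StrongBlock F V N 1 (⋃ ℓ ∈ L, ptsIn F V ℓ)) (hcard : L.ncard = N + N / 2)
    (hq : N + N / 2 ≤ Nat.card F) {a b c d : Submodule F V} (ha : a ∈ L) (hb : b ∈ L)
    (hc : c ∈ L) (hd : d ∈ L) (hab : a ≠ b) (hac : a ≠ c) (had : a ≠ d) (hbc : b ≠ c)
    (hbd : b ≠ d) (hcd : c ≠ d) (hiab : a ⊓ b ≠ ⊥) (hicd : c ⊓ d ≠ ⊥) : False := by
  have hT : ({a, b, c, d} : Set (Submodule F V)).ncard = 4 :=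
    Set.ncard_eq_four.mpr ⟨a, b, c, d, hab, hac, had, hbc, hbd, hcd, rfl⟩
  refine hL.false_of_core hN heven hV hdim hcard hq (T := {a, b, c, d})
    (S := a ⊔ b ⊔ c ⊓ d) (p := c ⊓ d) (by rintro ℓ (rfl | rfl | rfl | rfl) <;> assumption)
    le_sup_right ?_
    (finrank_sup_sup_inf_le_of_inf_ne_bot (hdim a ha) (hdim b hb) (hdim c hc) (hdim d hd) hiab hcd)
    hT.le (by have := finrank_inf_le_one_of_ne (hdim c hc) (hdim d hd) hcd; omega)
  rintro ℓ (rfl | rfl | rfl | rfl)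
  · exact Or.inl (le_sup_left.trans le_sup_left)
  · exact Or.inl (le_sup_right.trans le_sup_left)
  · exact Or.inr (ne_bot_of_le_ne_bot hicd (le_inf inf_le_left le_rfl))
  · exact Or.inr (ne_bot_of_le_ne_bot hicd (le_inf inf_le_right le_rfl))

end

end HP

/-- if `L` is a higgledy-piggledy set of lines of `PG(N,q)`, `N ≥ 4` even,
with `|L| = N + N/2 ≤ q`, then at most one (unordered) pair of lines of `L` intersects. -/
theorem stmt_8 (F : Type*) [Field F] [Fintype F] (N : ℕ) (hN : 4 ≤ N) (heven : Even N)
    (L : Set (Submodule F (Fin (N + 1) → F)))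
    (hdim : ∀ ℓ ∈ L, finrank F ℓ = 2)
    (hL : StrongBlock F (Fin (N + 1) → F) N 1 (⋃ ℓ ∈ L, ptsIn F (Fin (N + 1) → F) ℓ))
    (hcard : L.ncard = N + N / 2) (hq : N + N / 2 ≤ Fintype.card F) :
    ∀ ℓ₁ ∈ L, ∀ ℓ₂ ∈ L, ∀ ℓ₃ ∈ L, ∀ ℓ₄ ∈ L,
      ℓ₁ ≠ ℓ₂ → ℓ₃ ≠ ℓ₄ → ℓ₁ ⊓ ℓ₂ ≠ ⊥ → ℓ₃ ⊓ ℓ₄ ≠ ⊥ →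
        ({ℓ₁, ℓ₂} : Set (Submodule F (Fin (N + 1) → F))) = {ℓ₃, ℓ₄} := by
  intro ℓ₁ h₁ ℓ₂ h₂ ℓ₃ h₃ ℓ₄ h₄ h12 h34 hi12 hi34
  by_contra hne
  have hV : finrank F (Fin (N + 1) → F) = N + 1 := Module.finrank_fin_fun F
  rw [← Nat.card_eq_fintype_card] at hq
  have three := hL.false_of_three_lines hN heven hV hdim hcard hq
  by_cases h13 : ℓ₁ = ℓ₃
  · subst h13
    exact three h₁ h₂ h₄ h12 h34 (fun h => hne (by rw [h])) hi12 hi34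
  by_cases h14 : ℓ₁ = ℓ₄
  · subst h14
    exact three h₁ h₂ h₃ h12 h34.symm (fun h => hne (by rw [h, Set.pair_comm])) hi12
      (inf_comm ℓ₃ ℓ₁ ▸ hi34)
  by_cases h23 : ℓ₂ = ℓ₃
  · subst h23
    exact three h₂ h₁ h₄ h12.symm h34 (fun h => hne (by rw [h, Set.pair_comm]))
      (inf_comm ℓ₁ ℓ₂ ▸ hi12) hi34
  by_cases h24 : ℓ₂ = ℓ₄
  · subst h24
    exact three h₂ h₁ h₃ h12.symm h34.symm (fun h => hne (by rw [h]))
      (inf_comm ℓ₁ ℓ₂ ▸ hi12) (inf_comm ℓ₃ ℓ₂ ▸ hi34)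
  exact hL.false_of_four_lines hN heven hV hdim hcard hq h₁ h₂ h₃ h₄ h12 h13 h14 h23 h24 h34
    hi12 hi34
end

section
/- In PG(1,q^3), any F_q-linear set intersects an F_q-subline in 0, 1, 2, 3, or q+1 points. -/
open Module

namespace HP

variable (F F' : Type*) [Field F] [Field F'] [Algebra F F']

/-- An `F_q`-subline of the projective line `PG(1, F')` over an extension `F ⊆ F'`:
the image of the standard embedded `PG(1, F)` under an element of `PGL(2, F')`. -/
def IsSubline (b : Set (Projectivization F' (Fin 2 → F'))) : Prop :=
  ∃ g : (Fin 2 → F') ≃ₗ[F'] (Fin 2 → F'),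
    b = {P | ∃ (v : Fin 2 → F) (hv : g (fun i => algebraMap F F' (v i)) ≠ 0),
      P = Projectivization.mk F' (g (fun i => algebraMap F F' (v i))) hv}

/-- An `F_q`-linear set of `PG(1, F')`: the set of points represented by the nonzero
vectors of an `F_q`-subspace `W` of the `F`-vector space `F'^2`. -/
def IsLinearSet (S : Set (Projectivization F' (Fin 2 → F'))) : Prop :=
  ∃ W : Submodule F (Fin 2 → F'),
    S = {P | ∃ (v : Fin 2 → F') (hv : v ≠ 0), v ∈ W ∧ P = Projectivization.mk F' v hv}

end HP

open HP

/-!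
Write the subline as the image of `PG(1, F)` under the semilinear embedding `f = g ∘ ι`
of `F²` into `F'²`. The point `[f v]` lies in the linear set of `W` iff the `F`-linear map
`T_v : F' → F'² / W`, `μ ↦ μ f(v) mod W`, has a nonzero kernel, and `T_v` depends linearly
on `v`. If every `T_v` is singular, all `q + 1` points of the subline lie in the linear set.
Otherwise some `T_{v₀}` has a left inverse `L`, and if `T_{v₁ - t v₀} = T_{v₁} - t T_{v₀}`
kills `μ ≠ 0` then `L T_{v₁} μ = t μ`: the parameter `t` is an eigenvalue of an endomorphism
of the `3`-dimensional `F`-space `F'`, so at most `3` points of the subline lie in the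
linear set.
-/

open scoped LinearAlgebra.Projectivization

namespace Module.End

variable {K V : Type*} [Field K] [AddCommGroup V] [Module K V] [FiniteDimensional K V]

theorem ncard_setOf_hasEigenvalue_le (f : End K V) :
    {μ | f.HasEigenvalue μ}.ncard ≤ finrank K V := by
  classical
  have hroots : {μ | f.HasEigenvalue μ} = (f.charpoly.roots.toFinset : Set K) := by
    ext μ
    simp [hasEigenvalue_iff_isRoot_charpoly, f.charpoly_monic.ne_zero]
  calc {μ | f.HasEigenvalue μ}.ncard = f.charpoly.roots.toFinset.card := by
        rw [hroots, Set.ncard_coe_finset]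
    _ ≤ Multiset.card f.charpoly.roots := Multiset.toFinset_card_le _
    _ ≤ f.charpoly.natDegree := Polynomial.card_roots' _
    _ = finrank K V := f.charpoly_natDegree

end Module.End

section SpanSingleton

variable {K V : Type*} [Field K] [AddCommGroup V] [Module K V]

theorem sub_smul_ne_zero_of_notMem_span {v₀ v₁ : V} (hv₁ : v₁ ∉ K ∙ v₀) (t : K) :
    v₁ - t • v₀ ≠ 0 := fun h =>
  hv₁ (sub_eq_zero.1 h ▸ Submodule.smul_mem _ t (Submodule.mem_span_singleton_self v₀))

theorem exists_notMem_span_singleton (hV : 1 < finrank K V) {v₀ : V} (hv₀ : v₀ ≠ 0) :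
    ∃ v₁ : V, v₁ ∉ K ∙ v₀ := by
  have hne : (K ∙ v₀) ≠ ⊤ := fun h => by
    have := finrank_span_singleton (K := K) hv₀
    rw [h, finrank_top] at this
    omega
  obtain ⟨v₁, -, hv₁⟩ := SetLike.exists_of_lt (lt_top_iff_ne_top.2 hne)
  exact ⟨v₁, hv₁⟩

end SpanSingleton

namespace Projectivization

variable {K V : Type*} [Field K] [AddCommGroup V] [Module K V]

theorem eq_mk_or_exists_eq_mk_sub_smul (hV : finrank K V = 2) {v₀ v₁ : V} (hv₀ : v₀ ≠ 0)
    (hv₁ : v₁ ∉ K ∙ v₀) (P : ℙ K V) :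
    P = mk K v₀ hv₀ ∨
      ∃ t : K, P = mk K (v₁ - t • v₀) (sub_smul_ne_zero_of_notMem_span hv₁ t) := by
  have : FiniteDimensional K V := .of_finrank_pos (by omega)
  have hlt : (K ∙ v₀) < Submodule.span K {v₀, v₁} := by
    refine lt_of_le_of_ne (Submodule.span_mono (by simp)) fun h => hv₁ ?_
    rw [h]
    exact Submodule.subset_span (by simp)
  have htop : Submodule.span K {v₀, v₁} = ⊤ := by
    apply Submodule.eq_top_of_finrank_eq
    have := Submodule.finrank_lt_finrank_of_lt hlt
    have := Submodule.finrank_le (Submodule.span K {v₀, v₁})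
    rw [finrank_span_singleton hv₀] at *
    omega
  induction P using ind with
  | h v hv =>
    obtain ⟨a, b, hab⟩ := Submodule.mem_span_pair.1 (htop ▸ Submodule.mem_top : v ∈ _)
    by_cases hb : b = 0
    · left
      exact (mk_eq_mk_iff' K _ _ _ _).2 ⟨a, by rw [← hab, hb, zero_smul, add_zero]⟩
    · right
      refine ⟨-a / b, (mk_eq_mk_iff' K _ _ _ _).2 ⟨b, ?_⟩⟩
      rw [← hab, smul_sub, smul_smul, mul_div_cancel₀ _ hb, neg_smul, sub_neg_eq_add, add_comm]

section DegeneratePoints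

variable {E Q : Type*} [AddCommGroup E] [Module K E] [AddCommGroup Q] [Module K Q]

def degeneratePoints (B : V →ₗ[K] E →ₗ[K] Q) : Set (ℙ K V) :=
  {P | LinearMap.ker (B P.rep) ≠ ⊥}

theorem mk_mem_degeneratePoints {B : V →ₗ[K] E →ₗ[K] Q} {v : V} (hv : v ≠ 0) :
    mk K v hv ∈ degeneratePoints B ↔ LinearMap.ker (B v) ≠ ⊥ := by
  obtain ⟨a, ha⟩ := exists_smul_eq_mk_rep K v hv
  rw [degeneratePoints, Set.mem_ofPred_eq, ← ha, Units.smul_def, map_smul,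
    LinearMap.ker_smul _ _ a.ne_zero]

theorem ncard_degeneratePoints_le [FiniteDimensional K E] (hV : finrank K V = 2)
    (B : V →ₗ[K] E →ₗ[K] Q) {P₀ : ℙ K V} (hP₀ : P₀ ∉ degeneratePoints B) :
    (degeneratePoints B).ncard ≤ finrank K E := by
  set v₀ := P₀.rep
  have hv₀ : v₀ ≠ 0 := P₀.rep_nonzero
  obtain ⟨v₁, hv₁⟩ := exists_notMem_span_singleton (K := K) (by omega) hv₀
  obtain ⟨L, hL⟩ := (B v₀).exists_leftInverse_of_injective (not_not.1 hP₀)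
  set A : Module.End K E := L ∘ₗ B v₁ with hA
  have heigen : ∀ t : K, mk K (v₁ - t • v₀) (sub_smul_ne_zero_of_notMem_span hv₁ t) ∈
      degeneratePoints B → A.HasEigenvalue t := by
    intro t ht
    obtain ⟨μ, hμ, hμ0⟩ := Submodule.ne_bot_iff _ |>.1 ((mk_mem_degeneratePoints _).1 ht)
    have hBμ : B v₁ μ = t • B v₀ μ := by
      rw [LinearMap.mem_ker, map_sub, map_smul, LinearMap.sub_apply,
        LinearMap.smul_apply, sub_eq_zero] at hμ
      exact hμ
    refine Module.End.hasEigenvalue_of_hasEigenvector ⟨?_, hμ0⟩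
    rw [Module.End.mem_eigenspace_iff, hA, LinearMap.comp_apply, hBμ, map_smul,
      ← LinearMap.comp_apply, hL, LinearMap.id_apply]
  have hsub : degeneratePoints B ⊆
      (fun t => mk K (v₁ - t • v₀) (sub_smul_ne_zero_of_notMem_span hv₁ t)) ''
        {t | A.HasEigenvalue t} := by
    intro P hP
    rcases eq_mk_or_exists_eq_mk_sub_smul hV hv₀ hv₁ P with rfl | ⟨t, rfl⟩
    · exact absurd (by rwa [mk_rep] at hP) hP₀
    · exact ⟨t, heigen t hP, rfl⟩
  calc (degeneratePoints B).ncard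
      ≤ ((fun t => mk K (v₁ - t • v₀) (sub_smul_ne_zero_of_notMem_span hv₁ t)) ''
        {t | A.HasEigenvalue t}).ncard :=
        Set.ncard_le_ncard hsub (A.finite_hasEigenvalue.image _)
    _ ≤ {t | A.HasEigenvalue t}.ncard :=
        Set.ncard_image_le (Module.End.finite_hasEigenvalue _)
    _ ≤ finrank K E := Module.End.ncard_setOf_hasEigenvalue_le _

theorem degeneratePoints_eq_univ_or_ncard_le [FiniteDimensional K E] (hV : finrank K V = 2)
    (B : V →ₗ[K] E →ₗ[K] Q) :
    degeneratePoints B = Set.univ ∨ (degeneratePoints B).ncard ≤ finrank K E :=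
  or_iff_not_imp_left.2 fun h =>
    let ⟨_, hP₀⟩ := (Set.ne_univ_iff_exists_notMem _).1 h
    ncard_degeneratePoints_le hV B hP₀

end DegeneratePoints

end Projectivization

namespace HP

open Projectivization

section LinearSet

variable {F F' V' : Type*} [Field F] [Field F'] [AddCommGroup V'] [Module F' V'] [Module F V']

def linearSet (W : Submodule F V') : Set (ℙ F' V') :=
  {P | ∃ (v : V') (hv : v ≠ 0), v ∈ W ∧ P = mk F' v hv}

theorem mk_mem_linearSet_iff {W : Submodule F V'} {w : V'} (hw : w ≠ 0) :
    mk F' w hw ∈ linearSet W ↔ ∃ μ : F', μ ≠ 0 ∧ μ • w ∈ W := by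
  constructor
  · rintro ⟨v, hv, hvW, h⟩
    obtain ⟨a, rfl⟩ := (mk_eq_mk_iff F' _ _ _ _).1 h.symm
    exact ⟨a, a.ne_zero, hvW⟩
  · rintro ⟨μ, hμ, hμW⟩
    refine ⟨μ • w, smul_ne_zero hμ hw, hμW, ?_⟩
    exact ((mk_eq_mk_iff F' _ _ _ _).2 ⟨Units.mk0 μ hμ, rfl⟩).symm

variable {V : Type*} [AddCommGroup V] [Module F V] [Algebra F F'] [IsScalarTower F F' V']

def smulModBilin (f : V →ₛₗ[algebraMap F F'] V') (W : Submodule F V') :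
    V →ₗ[F] F' →ₗ[F] V' ⧸ W :=
  LinearMap.mk₂ F (fun v μ => W.mkQ (μ • f v))
    (fun v₁ v₂ μ => by rw [map_add, smul_add, map_add])
    (fun c v μ => by rw [f.map_smulₛₗ, smul_comm, algebraMap_smul, map_smul])
    (fun v μ₁ μ₂ => by rw [add_smul, map_add])
    (fun c v μ => by rw [smul_assoc, map_smul])

theorem degeneratePoints_smulModBilin (f : V →ₛₗ[algebraMap F F'] V')
    (hf : Function.Injective f) (W : Submodule F V') :
    degeneratePoints (smulModBilin f W) = map f hf ⁻¹' linearSet W := by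
  ext P
  induction P using ind with
  | h v hv =>
    rw [mk_mem_degeneratePoints, Submodule.ne_bot_iff, Set.mem_preimage, map_mk,
      mk_mem_linearSet_iff]
    simp [smulModBilin, and_comm]

theorem linearSet_inter_range_map (f : V →ₛₗ[algebraMap F F'] V') (hf : Function.Injective f)
    (W : Submodule F V') :
    linearSet W ∩ Set.range (map f hf) = map f hf '' degeneratePoints (smulModBilin f W) := by
  rw [degeneratePoints_smulModBilin f hf, Set.inter_comm, Set.image_preimage_eq_range_inter]

end LinearSet

section Subline

variable (F F' : Type*) [Field F] [Field F'] [Algebra F F'] (ι : Type*)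

def piAlgebraMap : (ι → F) →ₛₗ[algebraMap F F'] (ι → F') where
  toFun v i := algebraMap F F' (v i)
  map_add' v w := by ext; simp
  map_smul' c v := by ext; simp

theorem piAlgebraMap_injective : Function.Injective (piAlgebraMap F F' ι) := fun _ _ h =>
  funext fun i => (algebraMap F F').injective (congrFun h i)

theorem map_piAlgebraMap_injective :
    Function.Injective (map (piAlgebraMap F F' ι) (piAlgebraMap_injective F F' ι)) := by
  intro P P' h
  induction P using ind with | h v hv =>
  induction P' using ind with | h w hw =>
  rw [map_mk, map_mk, mk_eq_mk_iff'] at h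
  obtain ⟨c, hc⟩ := h
  obtain ⟨i, hi⟩ := Function.ne_iff.1 hw
  -- the scalar `c` is forced into `F` by any nonzero coordinate of `w`
  have hcF : c = algebraMap F F' (v i / w i) := by
    rw [map_div₀, eq_div_iff ((map_ne_zero _).2 hi)]
    exact congrFun hc i
  refine (mk_eq_mk_iff' F _ _ _ _).2 ⟨v i / w i, piAlgebraMap_injective F F' ι ?_⟩
  rw [LinearMap.map_smulₛₗ, ← hcF, hc]

variable {F' ι}

def sublineEmbedding (g : (ι → F') ≃ₗ[F'] (ι → F')) :
    (ι → F) →ₛₗ[algebraMap F F'] (ι → F') :=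
  (g : (ι → F') →ₗ[F'] (ι → F')).comp (piAlgebraMap F F' ι)

theorem sublineEmbedding_injective (g : (ι → F') ≃ₗ[F'] (ι → F')) :
    Function.Injective (sublineEmbedding F g) :=
  g.injective.comp (piAlgebraMap_injective F F' ι)

theorem map_sublineEmbedding_injective (g : (ι → F') ≃ₗ[F'] (ι → F')) :
    Function.Injective (map (sublineEmbedding F g) (sublineEmbedding_injective F g)) := by
  have h := (map_injective _ g.injective).comp (map_piAlgebraMap_injective F F' ι)
  rw [← map_comp] at h
  exact h

variable {F}

theorem isSubline_iff_exists_range_map {b : Set (ℙ F' (Fin 2 → F'))} :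
    IsSubline F F' b ↔
      ∃ g, b = Set.range (map (sublineEmbedding F g) (sublineEmbedding_injective F g)) := by
  refine exists_congr fun g => Eq.congr_right (Set.ext fun P => ⟨?_, ?_⟩)
  · rintro ⟨v, hv, rfl⟩
    exact ⟨mk F v fun h => hv (by rw [h]; exact (sublineEmbedding F g).map_zero), rfl⟩
  · rintro ⟨Q, rfl⟩
    induction Q using ind with
    | h v hv => exact ⟨v, _, rfl⟩

theorem isLinearSet_iff_exists_linearSet {S : Set (ℙ F' (Fin 2 → F'))} :
    IsLinearSet F F' S ↔ ∃ W : Submodule F (Fin 2 → F'), S = linearSet W :=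
  Iff.rfl

end Subline

end HP

open Projectivization in
theorem stmt_11_general (F F' : Type*) [Field F] [Fintype F] [Field F'] [Algebra F F']
    (hdeg : finrank F F' = 3)
    (S b : Set (Projectivization F' (Fin 2 → F')))
    (hS : IsLinearSet F F' S) (hb : IsSubline F F' b) :
    (S ∩ b).ncard = 0 ∨ (S ∩ b).ncard = 1 ∨ (S ∩ b).ncard = 2 ∨
      (S ∩ b).ncard = 3 ∨ (S ∩ b).ncard = Fintype.card F + 1 := by
  obtain ⟨W, rfl⟩ := isLinearSet_iff_exists_linearSet.1 hS
  obtain ⟨g, rfl⟩ := isSubline_iff_exists_range_map.1 hb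
  have : FiniteDimensional F F' := .of_finrank_pos (by omega)
  rw [linearSet_inter_range_map,
    Set.ncard_image_of_injective _ (map_sublineEmbedding_injective F g)]
  rcases degeneratePoints_eq_univ_or_ncard_le (by simp) (smulModBilin (sublineEmbedding F g) W)
    with h | h
  · rw [h, Set.ncard_univ, card_of_finrank_two _ _ (by simp), Nat.card_eq_fintype_card]
    tauto
  · omega

/-- in `PG(1,q^3)`, any `F_q`-linear set intersects an `F_q`-subline in
`0`, `1`, `2`, `3` or `q+1` points. -/
theorem stmt_11 (F F' : Type*) [Field F] [Fintype F] [Field F'] [Fintype F'] [Algebra F F']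
    (hdeg : finrank F F' = 3)
    (S b : Set (Projectivization F' (Fin 2 → F')))
    (hS : IsLinearSet F F' S) (hb : IsSubline F F' b) :
    (S ∩ b).ncard = 0 ∨ (S ∩ b).ncard = 1 ∨ (S ∩ b).ncard = 2 ∨
      (S ∩ b).ncard = 3 ∨ (S ∩ b).ncard = Fintype.card F + 1 :=
  stmt_11_general F F' hdeg S b hS hb
end

section
/- If direction: Let m ≥ 2 be even and q ≥ 3 a prime power. Then there exist three distinct F_q-sublines of PG(1,q^2) (embedded in PG(1,q^m)) that pairwise intersect in exactly 2 points and have no common point. -/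
open Module

open HP

/-!
Identify `PG(1, F')` with `F' ∪ {∞}` (`OnePoint.equivProjectivization`). Since `[F' : F]` is
even, some `α ∈ F'` has degree two over `F`, so `α² = tα + s` with `s, t ∈ F`; fix
`e ∈ F \ {0, 1}`. Take `b₁ = F ∪ {∞}`, `b₂ = αF ∪ {∞}` and `b₃` the subline through `1, e, α`.
By explicit computation `b₁ ∩ b₂ ⊇ {0, ∞}`, `b₁ ∩ b₃ ⊇ {1, e}` and `b₂ ∩ b₃ ⊇ {α, e / ᾱ}`, where
`ᾱ = t - α` is the conjugate of `α` and `e / ᾱ = α · (-e / s)`; translating `α` by an element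
of `F` we may assume `e ≠ -s = N(α)`, so that these two points differ. All three inclusions are
equalities because three points determine a subline: choosing representatives `u₁, u₂, u₁ + u₂`
and `v₁, v₂, v₁ + v₂` of three common points in the two `F`-structures, linear independence
forces the three proportionality constants to agree, so one structure is a scalar multiple of
the other. The triple intersection is `{0, ∞} ∩ {1, e} = ∅`.
-/

open scoped LinearAlgebra.Projectivization Matrix OnePoint
open OnePoint (equivProjectivization equivProjectivization_apply_coe
  equivProjectivization_apply_infinity coe_injective coe_ne_infty)

section TwoDimensional

variable {K V : Type*} [Field K] [AddCommGroup V] [Module K V]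

theorem LinearIndependent.exists_smul_add_smul_eq {u₁ u₂ : V}
    (h : LinearIndependent K ![u₁, u₂]) (hV : finrank K V = 2) (u : V) :
    ∃ x y : K, x • u₁ + y • u₂ = u := by
  have : FiniteDimensional K V := Module.finite_of_finrank_pos (by omega)
  rw [← Submodule.mem_span_pair, ← Matrix.range_cons_cons_empty,
    h.span_eq_top_of_card_eq_finrank' (by simp [hV])]
  exact Submodule.mem_top

theorem Projectivization.exists_linearIndependent_rep_add (hV : finrank K V = 2)
    {Q₁ Q₂ Q₃ : ℙ K V} (h₁₂ : Q₁ ≠ Q₂) (h₁₃ : Q₁ ≠ Q₃) (h₂₃ : Q₂ ≠ Q₃) :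
    ∃ (u₁ u₂ : V) (hu₁ : u₁ ≠ 0) (hu₂ : u₂ ≠ 0) (hu : u₁ + u₂ ≠ 0),
      LinearIndependent K ![u₁, u₂] ∧
        mk K u₁ hu₁ = Q₁ ∧ mk K u₂ hu₂ = Q₂ ∧ mk K (u₁ + u₂) hu = Q₃ := by
  have hli := linearIndependent_pair_iff_ne.mpr h₁₂
  obtain ⟨x, y, hxy⟩ := hli.exists_smul_add_smul_eq hV Q₃.rep
  have hx : x ≠ 0 := by
    rintro rfl
    refine h₂₃ (Eq.symm ?_)
    rw [← mk_rep Q₃, ← mk_rep Q₂, mk_eq_mk_iff']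
    exact ⟨y, by simpa using hxy⟩
  have hy : y ≠ 0 := by
    rintro rfl
    refine h₁₃ (Eq.symm ?_)
    rw [← mk_rep Q₃, ← mk_rep Q₁, mk_eq_mk_iff']
    exact ⟨x, by simpa using hxy⟩
  refine ⟨x • Q₁.rep, y • Q₂.rep, smul_ne_zero hx Q₁.rep_nonzero,
    smul_ne_zero hy Q₂.rep_nonzero, hxy ▸ Q₃.rep_nonzero, ?_, ?_, ?_, ?_⟩
  · rw [LinearIndependent.pair_iff] at hli ⊢
    intro a b hab
    simpa [hx, hy] using hli (a * x) (b * y) (by simpa [mul_smul] using hab)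
  · conv_rhs => rw [← mk_rep Q₁]
    exact (mk_eq_mk_iff' _ _ _ _ _).mpr ⟨x, rfl⟩
  · conv_rhs => rw [← mk_rep Q₂]
    exact (mk_eq_mk_iff' _ _ _ _ _).mpr ⟨y, rfl⟩
  · simp only [hxy, mk_rep]

end TwoDimensional

section Semilinear

variable {K L V W : Type*} [Field K] [Field L] [AddCommGroup V] [Module K V]
  [AddCommGroup W] [Module L W] {σ : K →+* L}

theorem LinearMap.smul_apply_eq_of_linearIndependent_pair (f f' : V →ₛₗ[σ] W)
    {u₁ u₂ v₁ v₂ : V} {c₁ c₂ c₃ : L} (hv : LinearIndependent L ![f' v₁, f' v₂])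
    (h₁ : c₁ • f' v₁ = f u₁) (h₂ : c₂ • f' v₂ = f u₂) (h₃ : c₃ • f' (v₁ + v₂) = f (u₁ + u₂))
    (x y : K) : c₁ • f' (x • v₁ + y • v₂) = f (x • u₁ + y • u₂) := by
  have hc : c₁ - c₃ = 0 ∧ c₂ - c₃ = 0 := by
    refine LinearIndependent.pair_iff.mp hv _ _ ?_
    rw [map_add, map_add, ← h₁, ← h₂] at h₃
    linear_combination (norm := module) -h₃
  obtain ⟨rfl, rfl⟩ : c₁ = c₃ ∧ c₂ = c₃ := ⟨sub_eq_zero.mp hc.1, sub_eq_zero.mp hc.2⟩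
  simp only [map_add, map_smulₛₗ, ← h₁, ← h₂]
  module

end Semilinear

namespace HP

open Projectivization

variable {F F' : Type*} [Field F] [Field F'] [Algebra F F']

section Subline

variable (F F') in
def inclPi (ι : Type*) : (ι → F) →ₛₗ[algebraMap F F'] (ι → F') where
  toFun v i := algebraMap F F' (v i)
  map_add' _ _ := by ext; simp
  map_smul' _ _ := by ext; simp

@[simp]
theorem inclPi_apply {ι : Type*} (v : ι → F) (i : ι) :
    inclPi F F' ι v i = algebraMap F F' (v i) := rfl

variable (F F') in
@[simp]
theorem inclPi_pair (x y : F) :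
    inclPi F F' (Fin 2) ![x, y] = ![algebraMap F F' x, algebraMap F F' y] := by
  ext i; fin_cases i <;> rfl

variable (F F') in
theorem inclPi_injective (ι : Type*) : Function.Injective (inclPi F F' ι) :=
  fun _ _ h => funext fun i => (algebraMap F F').injective (congrFun h i)

theorem linearIndependent_pair_inclPi {ι : Type*} {v w : ι → F}
    (h : LinearIndependent F ![v, w]) :
    LinearIndependent F' ![inclPi F F' ι v, inclPi F F' ι w] := by
  have hv : v ≠ 0 := by simpa using h.ne_zero 0
  rw [LinearIndependent.pair_iff' hv] at h
  rw [LinearIndependent.pair_iff' ((map_ne_zero_iff _ (inclPi_injective F F' ι)).mpr hv)]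
  rintro a ha
  obtain ⟨i, hi⟩ := Function.ne_iff.mp hv
  have hai : a = algebraMap F F' (w i / v i) := by
    rw [map_div₀, eq_div_iff (by simpa using hi), ← inclPi_apply, ← inclPi_apply, ← ha]
    rfl
  refine h (w i / v i) (inclPi_injective F F' ι ?_)
  rw [map_smulₛₗ, ← hai, ha]

/- Defined for every linear map, so that matrices can be used without an invertibility proof;
for a linear equivalence this is literally the set in `IsSubline`. -/
variable (F) in
def sublineOf (f : (Fin 2 → F') →ₗ[F'] (Fin 2 → F')) : Set (ℙ F' (Fin 2 → F')) :=
  {P | ∃ (v : Fin 2 → F) (hv : f (inclPi F F' _ v) ≠ 0), P = mk F' (f (inclPi F F' _ v)) hv}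

theorem isSubline_sublineOf {f : (Fin 2 → F') →ₗ[F'] (Fin 2 → F')}
    (hf : Function.Injective f) : IsSubline F F' (sublineOf F f) :=
  ⟨LinearEquiv.ofInjectiveEndo f hf, rfl⟩

theorem sublineOf_eq_range_map {f : (Fin 2 → F') →ₗ[F'] (Fin 2 → F')}
    (hf : Function.Injective f) :
    sublineOf F f =
      Set.range (map (f.comp (inclPi F F' _)) (hf.comp (inclPi_injective F F' _))) := by
  refine Set.ext fun P => ⟨?_, ?_⟩
  · rintro ⟨v, hv, rfl⟩
    exact ⟨mk F v (by rintro rfl; exact hv (map_zero (f.comp (inclPi F F' _)))), map_mk _ _ v _⟩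
  · rintro ⟨Q, rfl⟩
    induction Q using Projectivization.ind with
    | h v hv => exact ⟨v, _, map_mk _ _ v hv⟩

theorem sublineOf_subset_of_three {f h : (Fin 2 → F') →ₗ[F'] (Fin 2 → F')}
    (hf : Function.Injective f) (hh : Function.Injective h)
    {P₁ P₂ P₃ : ℙ F' (Fin 2 → F')} (h₁₂ : P₁ ≠ P₂) (h₁₃ : P₁ ≠ P₃) (h₂₃ : P₂ ≠ P₃)
    (hP₁ : P₁ ∈ sublineOf F f ∩ sublineOf F h) (hP₂ : P₂ ∈ sublineOf F f ∩ sublineOf F h)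
    (hP₃ : P₃ ∈ sublineOf F f ∩ sublineOf F h) :
    sublineOf F f ⊆ sublineOf F h := by
  rw [sublineOf_eq_range_map hf, sublineOf_eq_range_map hh] at *
  set φ := f.comp (inclPi F F' (Fin 2))
  set ψ := h.comp (inclPi F F' (Fin 2))
  have hdim : finrank F (Fin 2 → F) = 2 := by simp
  obtain ⟨⟨Q₁, hQ₁⟩, R₁, hR₁⟩ := hP₁
  obtain ⟨⟨Q₂, hQ₂⟩, R₂, hR₂⟩ := hP₂
  obtain ⟨⟨Q₃, hQ₃⟩, R₃, hR₃⟩ := hP₃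
  obtain ⟨u₁, u₂, _, _, _, hu_li, rfl, rfl, rfl⟩ := exists_linearIndependent_rep_add hdim
    (ne_of_apply_ne _ (hQ₁.trans_ne (hQ₂ ▸ h₁₂))) (ne_of_apply_ne _ (hQ₁.trans_ne (hQ₃ ▸ h₁₃)))
    (ne_of_apply_ne _ (hQ₂.trans_ne (hQ₃ ▸ h₂₃)))
  obtain ⟨v₁, v₂, _, _, _, hv_li, rfl, rfl, rfl⟩ := exists_linearIndependent_rep_add hdim
    (ne_of_apply_ne _ (hR₁.trans_ne (hR₂ ▸ h₁₂))) (ne_of_apply_ne _ (hR₁.trans_ne (hR₃ ▸ h₁₃)))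
    (ne_of_apply_ne _ (hR₂.trans_ne (hR₃ ▸ h₂₃)))
  simp only [map_mk] at hQ₁ hQ₂ hQ₃ hR₁ hR₂ hR₃
  obtain ⟨c₁, hc₁⟩ := (mk_eq_mk_iff' _ _ _ _ _).mp (hQ₁.trans hR₁.symm)
  obtain ⟨c₂, hc₂⟩ := (mk_eq_mk_iff' _ _ _ _ _).mp (hQ₂.trans hR₂.symm)
  obtain ⟨c₃, hc₃⟩ := (mk_eq_mk_iff' _ _ _ _ _).mp (hQ₃.trans hR₃.symm)
  have hψ_li : LinearIndependent F' ![ψ v₁, ψ v₂] := by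
    refine LinearIndependent.pair_iff.mpr fun a b hab ↦
      LinearIndependent.pair_iff.mp (linearIndependent_pair_inclPi (F' := F') hv_li) a b (hh ?_)
    rw [map_add, map_smul, map_smul, map_zero]
    exact hab
  rintro _ ⟨Q, rfl⟩
  induction Q using Projectivization.ind with
  | h u hu =>
    obtain ⟨x, y, rfl⟩ := hu_li.exists_smul_add_smul_eq hdim u
    have key := LinearMap.smul_apply_eq_of_linearIndependent_pair φ ψ hψ_li hc₁ hc₂ hc₃ x y
    have hw : x • v₁ + y • v₂ ≠ 0 := by
      rintro hw
      rw [hw, map_zero, smul_zero] at key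
      exact (map_ne_zero_iff φ (hf.comp (inclPi_injective F F' _))).mpr hu key.symm
    refine ⟨mk F _ hw, ?_⟩
    rw [map_mk, map_mk, eq_comm, mk_eq_mk_iff']
    exact ⟨c₁, key⟩

theorem sublineOf_eq_of_three {f h : (Fin 2 → F') →ₗ[F'] (Fin 2 → F')}
    (hf : Function.Injective f) (hh : Function.Injective h)
    {P₁ P₂ P₃ : ℙ F' (Fin 2 → F')} (h₁₂ : P₁ ≠ P₂) (h₁₃ : P₁ ≠ P₃) (h₂₃ : P₂ ≠ P₃)
    (hP₁ : P₁ ∈ sublineOf F f ∩ sublineOf F h) (hP₂ : P₂ ∈ sublineOf F f ∩ sublineOf F h)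
    (hP₃ : P₃ ∈ sublineOf F f ∩ sublineOf F h) :
    sublineOf F f = sublineOf F h := by
  refine (sublineOf_subset_of_three hf hh h₁₂ h₁₃ h₂₃ hP₁ hP₂ hP₃).antisymm ?_
  rw [Set.inter_comm] at hP₁ hP₂ hP₃
  exact sublineOf_subset_of_three hh hf h₁₂ h₁₃ h₂₃ hP₁ hP₂ hP₃

theorem sublineOf_inter_eq_pair {f h : (Fin 2 → F') →ₗ[F'] (Fin 2 → F')}
    (hf : Function.Injective f) (hh : Function.Injective h)
    (hfh : sublineOf F f ≠ sublineOf F h) {P P' : ℙ F' (Fin 2 → F')} (hPP' : P ≠ P')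
    (hP : P ∈ sublineOf F f ∩ sublineOf F h) (hP' : P' ∈ sublineOf F f ∩ sublineOf F h) :
    sublineOf F f ∩ sublineOf F h = {P, P'} := by
  refine Set.Subset.antisymm (fun R hR => ?_)
    (Set.insert_subset hP (Set.singleton_subset_iff.mpr hP'))
  by_contra hR'
  simp only [Set.mem_insert_iff, Set.mem_singleton_iff, not_or] at hR'
  exact hfh (sublineOf_eq_of_three hf hh hPP' (Ne.symm hR'.1) (Ne.symm hR'.2) hP hP' hR)

theorem mk_mem_sublineOf {f : (Fin 2 → F') →ₗ[F'] (Fin 2 → F')} {w : Fin 2 → F'} (hw : w ≠ 0)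
    (v : Fin 2 → F) (c : F') (h : c • f (inclPi F F' _ v) = w) : mk F' w hw ∈ sublineOf F f := by
  have hv : f (inclPi F F' _ v) ≠ 0 := by rintro hv; rw [hv, smul_zero] at h; exact hw h.symm
  exact ⟨v, hv, (mk_eq_mk_iff' _ _ _ _ _).mpr ⟨c, h⟩⟩

end Subline

section Points

variable [DecidableEq F'] {f : (Fin 2 → F') →ₗ[F'] (Fin 2 → F')}

theorem coe_mem_sublineOf {z : F'} (v : Fin 2 → F) (h₁ : f (inclPi F F' _ v) 1 ≠ 0)
    (h₀ : f (inclPi F F' _ v) 0 = f (inclPi F F' _ v) 1 * z) :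
    equivProjectivization F' z ∈ sublineOf F f := by
  rw [equivProjectivization_apply_coe]
  refine mk_mem_sublineOf _ v (f (inclPi F F' _ v) 1)⁻¹
    (funext (Fin.forall_fin_two.mpr ⟨?_, ?_⟩))
  · simp only [Pi.smul_apply, smul_eq_mul, h₀, inv_mul_cancel_left₀ h₁]; rfl
  · simp only [Pi.smul_apply, smul_eq_mul, inv_mul_cancel₀ h₁]; rfl

theorem infty_mem_sublineOf (v : Fin 2 → F) (h₀ : f (inclPi F F' _ v) 0 ≠ 0)
    (h₁ : f (inclPi F F' _ v) 1 = 0) :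
    equivProjectivization F' ∞ ∈ sublineOf F f := by
  rw [equivProjectivization_apply_infinity]
  refine mk_mem_sublineOf _ v (f (inclPi F F' _ v) 0)⁻¹
    (funext (Fin.forall_fin_two.mpr ⟨?_, ?_⟩))
  · simp only [Pi.smul_apply, smul_eq_mul, inv_mul_cancel₀ h₀]; rfl
  · simp only [Pi.smul_apply, smul_eq_mul, h₁, mul_zero]; rfl

end Points

section Diagonal

theorem mulVecLin_diag_injective {c : F'} (hc : c ≠ 0) :
    Function.Injective !![c, 0; 0, 1].mulVecLin :=
  Matrix.mulVec_injective_of_det_ne_zero (by simpa [Matrix.det_fin_two_of] using hc)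

variable [DecidableEq F']

theorem coe_mem_sublineOf_diag_iff (c z : F') :
    equivProjectivization F' z ∈ sublineOf F !![c, 0; 0, 1].mulVecLin ↔
      ∃ a : F, algebraMap F F' a * c = z := by
  constructor
  · rintro ⟨v, hv, hz⟩
    obtain ⟨b, hb⟩ := (mk_eq_mk_iff' _ _ _ _ _).mp hz.symm
    have h₀ := congrFun hb 0
    have h₁ := congrFun hb 1
    simp only [Pi.smul_apply, smul_eq_mul, Matrix.mulVecBilin_apply, Matrix.mulVec_fin_two,
      Matrix.of_apply, Matrix.cons_val', Matrix.cons_val_zero, Matrix.cons_val_one,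
      Matrix.cons_val_fin_one, inclPi_apply, zero_mul, add_zero, mul_one, one_mul,
      zero_add] at h₀ h₁
    have hv₁ : algebraMap F F' (v 1) ≠ 0 := fun hv₁ => hv (by rw [← hb, h₁, hv₁, zero_smul])
    refine ⟨v 0 / v 1, ?_⟩
    rw [map_div₀, div_mul_eq_mul_div, div_eq_iff hv₁]
    linear_combination h₁ * z - h₀
  · rintro ⟨a, rfl⟩
    exact coe_mem_sublineOf ![a, 1] (by simp) (by simp [Algebra.smul_def, mul_comm])

theorem coe_mem_sublineOf_one_iff (z : F') :
    equivProjectivization F' z ∈ sublineOf F !![1, 0; 0, 1].mulVecLin ↔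
      z ∈ Set.range (algebraMap F F') := by
  rw [coe_mem_sublineOf_diag_iff]
  simp only [mul_one, Set.mem_range]

theorem coe_one_notMem_sublineOf_diag {c : F'} (hc : c ∉ Set.range (algebraMap F F')) :
    equivProjectivization F' (1 : F') ∉ sublineOf F !![c, 0; 0, 1].mulVecLin := by
  rw [coe_mem_sublineOf_diag_iff]
  rintro ⟨a, ha⟩
  exact hc ⟨a⁻¹, by rw [map_inv₀, eq_inv_of_mul_eq_one_right ha]⟩

theorem infty_mem_sublineOf_diag {c : F'} (hc : c ≠ 0) :
    equivProjectivization F' ∞ ∈ sublineOf F !![c, 0; 0, 1].mulVecLin :=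
  infty_mem_sublineOf ![1, 0] (by simpa using hc) (by simp)

end Diagonal

section Through

-- Sends the `F`-rational points `(1 : 0)`, `(0 : 1)`, `(1 : 1)` to `p`, `q`, `r`.
def throughMatrix (p q r : F') : Matrix (Fin 2) (Fin 2) F' :=
  !![p * (q - r), q * (r - p); q - r, r - p]

theorem det_throughMatrix (p q r : F') :
    (throughMatrix p q r).det = (p - q) * (q - r) * (r - p) := by
  rw [throughMatrix, Matrix.det_fin_two_of]
  ring

theorem mulVecLin_throughMatrix_injective {p q r : F'} (hpq : p ≠ q) (hqr : q ≠ r)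
    (hrp : r ≠ p) : Function.Injective (throughMatrix p q r).mulVecLin :=
  Matrix.mulVec_injective_of_det_ne_zero (by
    rw [det_throughMatrix]
    exact mul_ne_zero (mul_ne_zero (sub_ne_zero.mpr hpq) (sub_ne_zero.mpr hqr))
      (sub_ne_zero.mpr hrp))

variable [DecidableEq F']

theorem coe_mem_sublineOf_throughMatrix {p q r : F'} (hpq : p ≠ q) (hqr : q ≠ r)
    (hrp : r ≠ p) :
    equivProjectivization F' p ∈ sublineOf F (throughMatrix p q r).mulVecLin ∧
      equivProjectivization F' q ∈ sublineOf F (throughMatrix p q r).mulVecLin ∧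
      equivProjectivization F' r ∈ sublineOf F (throughMatrix p q r).mulVecLin := by
  refine ⟨coe_mem_sublineOf ![1, 0] ?_ ?_, coe_mem_sublineOf ![0, 1] ?_ ?_,
    coe_mem_sublineOf ![1, 1] ?_ ?_⟩ <;>
    simp only [throughMatrix, inclPi_pair, map_one, map_zero, Matrix.mulVecBilin_apply,
      Matrix.mulVec_fin_two, Matrix.of_apply, Matrix.cons_val', Matrix.cons_val_fin_one,
      Matrix.cons_val_zero, Matrix.cons_val_one, mul_one, mul_zero, add_zero, zero_add,
      sub_add_sub_cancel, ne_eq, sub_eq_zero] <;>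
    first | ring | exact hqr | exact hrp | exact Ne.symm hpq

/- With `ᾱ = t - α` the conjugate of `α`, the point is `e / ᾱ`, and its preimage under
`throughMatrix 1 e α` is `(e N(1 - α) : N(e - α))`, where `N z = z z̄`. -/
theorem coe_mul_mem_sublineOf_throughMatrix {α : F'} {s t e : F}
    (hα : α ∉ Set.range (algebraMap F F'))
    (hrel : α ^ 2 = algebraMap F F' t * α + algebraMap F F' s) (he : e ≠ 1) :
    equivProjectivization F' (α * algebraMap F F' (-e / s)) ∈
      sublineOf F (throughMatrix 1 (algebraMap F F' e) α).mulVecLin := by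
  set E := algebraMap F F' e
  set α' := algebraMap F F' t - α
  have hα' : α' ≠ 0 := sub_ne_zero.mpr (ne_of_mem_of_not_mem (Set.mem_range_self t) hα)
  have hs : algebraMap F F' s = -(α * α') := by linear_combination -hrel
  have hx : algebraMap F F' (e * (1 - t - s)) = E * (1 - α) * (1 - α') := by
    simp only [map_mul, map_sub, map_one, hs]; ring
  have hy : algebraMap F F' (e ^ 2 - t * e - s) = (E - α) * (E - α') := by
    simp only [map_mul, map_sub, map_pow, hs]; ring
  have hY : (E - α) * (E * (1 - α) * (1 - α')) + (α - 1) * ((E - α) * (E - α')) =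
      (E - α) * (α - 1) * (E - 1) * α' := by ring
  refine coe_mem_sublineOf ![e * (1 - t - s), e ^ 2 - t * e - s] ?_ ?_ <;>
    simp only [throughMatrix, Matrix.mulVecLin_apply, Matrix.mulVec_fin_two, inclPi_pair, hx, hy,
      Matrix.of_apply, Matrix.cons_val', Matrix.cons_val_zero, Matrix.cons_val_one,
      Matrix.cons_val_fin_one, hY]
  · refine mul_ne_zero (mul_ne_zero (mul_ne_zero ?_ ?_) ?_) hα'
    · exact sub_ne_zero.mpr (ne_of_mem_of_not_mem (Set.mem_range_self e) hα)
    · exact sub_ne_zero.mpr fun h => hα ⟨1, by rw [h, map_one]⟩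
    · exact sub_ne_zero.mpr fun h => he ((algebraMap F F').injective (h.trans (map_one _).symm))
  · have hα₀ : α ≠ 0 := fun h => hα ⟨0, by rw [h, map_zero]⟩
    rw [map_div₀, map_neg, hs]
    field_simp
    ring

end Through

section Configuration

theorem sublineOf_one_ne_diag {c : F'} (hc : c ∉ Set.range (algebraMap F F')) :
    sublineOf F !![1, 0; 0, 1].mulVecLin ≠ sublineOf F !![c, 0; 0, 1].mulVecLin := by
  classical
  exact ne_of_mem_of_not_mem' ((coe_mem_sublineOf_one_iff 1).mpr ⟨1, map_one _⟩)
    (coe_one_notMem_sublineOf_diag hc)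

theorem sublineOf_one_ne_throughMatrix {p q r : F'} (hpq : p ≠ q) (hqr : q ≠ r) (hrp : r ≠ p)
    (hr : r ∉ Set.range (algebraMap F F')) :
    sublineOf F !![1, 0; 0, 1].mulVecLin ≠ sublineOf F (throughMatrix p q r).mulVecLin := by
  classical
  exact (ne_of_mem_of_not_mem' (coe_mem_sublineOf_throughMatrix hpq hqr hrp).2.2
    (by rwa [coe_mem_sublineOf_one_iff])).symm

theorem sublineOf_diag_ne_throughMatrix {q r : F'} (h1q : 1 ≠ q) (hqr : q ≠ r) (hr1 : r ≠ 1)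
    (hr : r ∉ Set.range (algebraMap F F')) :
    sublineOf F !![r, 0; 0, 1].mulVecLin ≠ sublineOf F (throughMatrix 1 q r).mulVecLin := by
  classical
  exact (ne_of_mem_of_not_mem' (coe_mem_sublineOf_throughMatrix h1q hqr hr1).1
    (coe_one_notMem_sublineOf_diag hr)).symm

theorem sublineOf_one_inter_diag [DecidableEq F'] {c : F'}
    (hc : c ∉ Set.range (algebraMap F F')) :
    sublineOf F !![1, 0; 0, 1].mulVecLin ∩ sublineOf F !![c, 0; 0, 1].mulVecLin =
      {equivProjectivization F' (0 : F'), equivProjectivization F' ∞} := by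
  have hc₀ : c ≠ 0 := fun h => hc ⟨0, by rw [h, map_zero]⟩
  exact sublineOf_inter_eq_pair (mulVecLin_diag_injective one_ne_zero)
    (mulVecLin_diag_injective hc₀) (sublineOf_one_ne_diag hc)
    ((equivProjectivization F').injective.ne (coe_ne_infty 0))
    ⟨(coe_mem_sublineOf_diag_iff _ _).mpr ⟨0, by simp⟩,
      (coe_mem_sublineOf_diag_iff _ _).mpr ⟨0, by simp⟩⟩
    ⟨infty_mem_sublineOf_diag one_ne_zero, infty_mem_sublineOf_diag hc₀⟩

theorem sublineOf_one_inter_throughMatrix [DecidableEq F'] {p q r : F'}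
    (hp : p ∈ Set.range (algebraMap F F')) (hq : q ∈ Set.range (algebraMap F F')) (hpq : p ≠ q)
    (hr : r ∉ Set.range (algebraMap F F')) :
    sublineOf F !![1, 0; 0, 1].mulVecLin ∩ sublineOf F (throughMatrix p q r).mulVecLin =
      {equivProjectivization F' p, equivProjectivization F' q} := by
  have hqr : q ≠ r := fun h => hr (h ▸ hq)
  have hrp : r ≠ p := fun h => hr (h ▸ hp)
  obtain ⟨hp', hq', -⟩ := coe_mem_sublineOf_throughMatrix (F := F) hpq hqr hrp
  exact sublineOf_inter_eq_pair (mulVecLin_diag_injective one_ne_zero)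
    (mulVecLin_throughMatrix_injective hpq hqr hrp) (sublineOf_one_ne_throughMatrix hpq hqr hrp hr)
    ((equivProjectivization F').injective.ne (coe_injective.ne hpq))
    ⟨(coe_mem_sublineOf_one_iff _).mpr hp, hp'⟩ ⟨(coe_mem_sublineOf_one_iff _).mpr hq, hq'⟩

theorem ncard_sublineOf_diag_inter_throughMatrix {α : F'} {s t e : F}
    (hα : α ∉ Set.range (algebraMap F F'))
    (hrel : α ^ 2 = algebraMap F F' t * α + algebraMap F F' s) (he : e ≠ 1) (hes : e ≠ -s) :
    (sublineOf F !![α, 0; 0, 1].mulVecLin ∩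
        sublineOf F (throughMatrix 1 (algebraMap F F' e) α).mulVecLin).ncard = 2 := by
  classical
  have hα₀ : α ≠ 0 := fun h => hα ⟨0, by rw [h, map_zero]⟩
  have hα₁ : α ≠ 1 := fun h => hα ⟨1, by rw [h, map_one]⟩
  have h1e : 1 ≠ algebraMap F F' e :=
    fun h => he ((algebraMap F F').injective (by rw [← h, map_one]))
  have heα : algebraMap F F' e ≠ α := ne_of_mem_of_not_mem (Set.mem_range_self e) hα
  have hw : α ≠ α * algebraMap F F' (-e / s) := by
    refine fun h => hes ?_
    have h₁ : -e / s = 1 := (algebraMap F F').injective (by simpa [hα₀] using h.symm)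
    have hs : s ≠ 0 := by rintro rfl; simp at h₁
    rw [div_eq_one_iff_eq hs] at h₁
    linear_combination -h₁
  have hw' := (equivProjectivization F').injective.ne (coe_injective.ne hw)
  rw [sublineOf_inter_eq_pair (mulVecLin_diag_injective hα₀)
    (mulVecLin_throughMatrix_injective h1e heα hα₁)
    (sublineOf_diag_ne_throughMatrix h1e heα hα₁ hα) hw'
    ⟨(coe_mem_sublineOf_diag_iff _ _).mpr ⟨1, by simp⟩,
      (coe_mem_sublineOf_throughMatrix h1e heα hα₁).2.2⟩
    ⟨(coe_mem_sublineOf_diag_iff _ _).mpr ⟨-e / s, mul_comm _ _⟩,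
      coe_mul_mem_sublineOf_throughMatrix hα hrel he⟩]
  exact Set.ncard_pair hw'

end Configuration

end HP

section QuadraticElement

variable {F F' : Type*} [Field F] [Field F'] [Algebra F F']

theorem FiniteField.exists_natDegree_minpoly_eq_two [Finite F'] (h : 2 ∣ finrank F F') :
    ∃ α : F', (minpoly F α).natDegree = 2 := by
  have : Finite F := Finite.of_injective _ (algebraMap F F').injective
  have : Fact (ringChar F).Prime := ⟨CharP.char_is_prime F _⟩
  let K := FiniteField.Extension F (ringChar F) 2
  obtain ⟨φ⟩ := FiniteField.nonempty_algHom_of_finrank_dvd (K := K) (L := F')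
    (by rwa [FiniteField.finrank_extension])
  obtain ⟨β, hβ⟩ := Field.exists_primitive_element F K
  refine ⟨φ β, ?_⟩
  rw [minpoly.algHom_eq φ φ.injective,
    ← IntermediateField.adjoin.finrank (Algebra.IsIntegral.isIntegral β), hβ,
    IntermediateField.finrank_top', FiniteField.finrank_extension]

theorem exists_sq_eq_of_natDegree_minpoly_eq_two {α : F'} (h : (minpoly F α).natDegree = 2) :
    ∃ s t : F, α ^ 2 = algebraMap F F' t * α + algebraMap F F' s := by
  have hint : IsIntegral F α := by
    by_contra h'
    rw [minpoly.eq_zero h'] at h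
    simp at h
  have h₂ : (minpoly F α).coeff 2 = 1 := h ▸ (minpoly.monic hint).coeff_natDegree
  have hα := minpoly.aeval F α
  rw [Polynomial.aeval_eq_sum_range, h, Finset.sum_range_succ, Finset.sum_range_succ,
    Finset.sum_range_one, h₂] at hα
  refine ⟨-(minpoly F α).coeff 0, -(minpoly F α).coeff 1, ?_⟩
  simp only [map_neg, Algebra.smul_def, map_one] at hα ⊢
  linear_combination hα

/- `-s` is the norm of `α`, and the norm of `α - c` is `c² - tc - s`; this monic quadratic in `c`
cannot take the value `e` at all three of `c = 0, 1, e`. -/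
theorem exists_sq_eq_add_with_ne_neg {α : F'} {s t e : F} (hα : α ∉ Set.range (algebraMap F F'))
    (hrel : α ^ 2 = algebraMap F F' t * α + algebraMap F F' s) (he₀ : e ≠ 0) (he₁ : e ≠ 1) :
    ∃ (β : F') (s' t' : F), β ∉ Set.range (algebraMap F F') ∧
      β ^ 2 = algebraMap F F' t' * β + algebraMap F F' s' ∧ e ≠ -s' := by
  obtain ⟨c, hc⟩ : ∃ c : F, e ≠ -(s + t * c - c ^ 2) := by
    by_contra! h
    have : e * (e - 1) = 0 := by linear_combination h 0 - h e + e * (h 1 - h 0)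
    exact mul_ne_zero he₀ (sub_ne_zero.mpr he₁) this
  refine ⟨α - algebraMap F F' c, s + t * c - c ^ 2, t - 2 * c,
    fun ⟨a, ha⟩ => hα ⟨a + c, ?_⟩, ?_, hc⟩
  · rw [map_add, ha, sub_add_cancel]
  · simp only [map_add, map_sub, map_mul, map_pow, map_ofNat]
    linear_combination hrel

theorem exists_ne_zero_ne_one [Fintype F] (hq : 3 ≤ Fintype.card F) :
    ∃ e : F, e ≠ 0 ∧ e ≠ 1 := by
  classical
  obtain ⟨e, -, he⟩ := Finset.exists_mem_notMem_of_card_lt_card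
    (s := ({0, 1} : Finset F)) (t := Finset.univ)
    (by rw [Finset.card_univ]; exact Finset.card_le_two.trans_lt hq)
  exact ⟨e, by simpa [not_or] using he⟩

theorem exists_quadratic_and_scalar [Fintype F] [Finite F'] (h : 2 ∣ finrank F F')
    (hq : 3 ≤ Fintype.card F) :
    ∃ (α : F') (s t e : F), α ∉ Set.range (algebraMap F F') ∧
      α ^ 2 = algebraMap F F' t * α + algebraMap F F' s ∧ e ≠ 0 ∧ e ≠ 1 ∧ e ≠ -s := by
  obtain ⟨α, hα⟩ := FiniteField.exists_natDegree_minpoly_eq_two h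
  obtain ⟨s, t, hrel⟩ := exists_sq_eq_of_natDegree_minpoly_eq_two hα
  have hα' : α ∉ Set.range (algebraMap F F') := fun h' => by
    rw [minpoly.natDegree_eq_one_iff.mpr h'] at hα
    exact absurd hα (by norm_num)
  obtain ⟨e, he₀, he₁⟩ := exists_ne_zero_ne_one hq
  obtain ⟨β, s', t', hβ, hrel', hes⟩ := exists_sq_eq_add_with_ne_neg hα' hrel he₀ he₁
  exact ⟨β, s', t', e, hβ, hrel', he₀, he₁, hes⟩

end QuadraticElement

theorem stmt_14_general (F F' : Type*) [Field F] [Fintype F] [Field F'] [Fintype F'] [Algebra F F']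
    (m : ℕ) (hmeven : Even m) (hdeg : finrank F F' = m)
    (hq : 3 ≤ Fintype.card F) :
    ∃ b₁ b₂ b₃ : Set (Projectivization F' (Fin 2 → F')),
      IsSubline F F' b₁ ∧ IsSubline F F' b₂ ∧ IsSubline F F' b₃ ∧
      b₁ ≠ b₂ ∧ b₁ ≠ b₃ ∧ b₂ ≠ b₃ ∧
      (b₁ ∩ b₂).ncard = 2 ∧ (b₁ ∩ b₃).ncard = 2 ∧ (b₂ ∩ b₃).ncard = 2 ∧
      b₁ ∩ b₂ ∩ b₃ = ∅ := by
  classical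
  obtain ⟨α, s, t, e, hα, hrel, he₀, he₁, hes⟩ :=
    exists_quadratic_and_scalar (F' := F') (hdeg ▸ hmeven.two_dvd) hq
  have hα₀ : α ≠ 0 := fun h => hα ⟨0, by rw [h, map_zero]⟩
  have hα₁ : α ≠ 1 := fun h => hα ⟨1, by rw [h, map_one]⟩
  have h1e : 1 ≠ algebraMap F F' e :=
    fun h => he₁ ((algebraMap F F').injective (by rw [← h, map_one]))
  have heα : algebraMap F F' e ≠ α := ne_of_mem_of_not_mem (Set.mem_range_self e) hα
  have h₁₂ := sublineOf_one_inter_diag (F := F) hα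
  have h₁₃ := sublineOf_one_inter_throughMatrix (F := F) ⟨1, map_one _⟩ ⟨e, rfl⟩ h1e hα
  refine ⟨_, _, _, isSubline_sublineOf (mulVecLin_diag_injective one_ne_zero),
    isSubline_sublineOf (mulVecLin_diag_injective hα₀),
    isSubline_sublineOf (mulVecLin_throughMatrix_injective h1e heα hα₁),
    sublineOf_one_ne_diag hα, sublineOf_one_ne_throughMatrix h1e heα hα₁ hα,
    sublineOf_diag_ne_throughMatrix h1e heα hα₁ hα, ?_, ?_,
    ncard_sublineOf_diag_inter_throughMatrix hα hrel he₁ hes, ?_⟩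
  · rw [h₁₂]
    exact Set.ncard_pair ((equivProjectivization F').injective.ne (coe_ne_infty 0))
  · rw [h₁₃]
    exact Set.ncard_pair ((equivProjectivization F').injective.ne (coe_injective.ne h1e))
  · rw [Set.inter_assoc, Set.inter_inter_distrib_left, h₁₂, h₁₃, ← Set.image_pair,
      ← Set.image_pair, ← Set.image_inter (equivProjectivization F').injective, Set.image_eq_empty]
    refine Set.eq_empty_of_forall_notMem fun x ⟨hx, hx'⟩ => ?_
    rcases hx with rfl | rfl <;> simp [((map_ne_zero _).mpr he₀).symm] at hx'

/-- if direction: for `m ≥ 2` even and `q ≥ 3`, there exist three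
distinct `F_q`-sublines of `PG(1,q^m)` pairwise intersecting in exactly two points and
with no common point. -/
theorem stmt_14 (F F' : Type*) [Field F] [Fintype F] [Field F'] [Fintype F'] [Algebra F F']
    (m : ℕ) (hm : 2 ≤ m) (hmeven : Even m) (hdeg : finrank F F' = m)
    (hq : 3 ≤ Fintype.card F) :
    ∃ b₁ b₂ b₃ : Set (Projectivization F' (Fin 2 → F')),
      IsSubline F F' b₁ ∧ IsSubline F F' b₂ ∧ IsSubline F F' b₃ ∧
      b₁ ≠ b₂ ∧ b₁ ≠ b₃ ∧ b₂ ≠ b₃ ∧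
      (b₁ ∩ b₂).ncard = 2 ∧ (b₁ ∩ b₃).ncard = 2 ∧ (b₂ ∩ b₃).ncard = 2 ∧
      b₁ ∩ b₂ ∩ b₃ = ∅ :=
  stmt_14_general F F' m hmeven hdeg hq
end

section
/- Let q ≥ 7 be a prime power. Any seven planes of PG(5,q) in higgledy-piggledy arrangement are pairwise disjoint. -/
open Module

open HP

namespace Submodule

variable {F V : Type*} [Field F] [AddCommGroup V] [Module F V]

theorem exists_forall_notMem_of_card_lt [Fintype F] (s : Finset (Submodule F V))
    (hs : ∀ p ∈ s, p ≠ ⊤) (hcard : s.card < Fintype.card F) : ∃ v : V, ∀ p ∈ s, v ∉ p := by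
  have hunion := iUnion_ssubset_of_forall_ne_top_of_card_lt Finset.univ
    (fun p : s => (p : Submodule F V)) (fun p => hs p p.2)
    (by simpa [ENat.card_eq_coe_fintype_card] using hcard)
  obtain ⟨v, -, hv⟩ := Set.exists_of_ssubset hunion
  exact ⟨v, fun p hp hvp => hv (Set.mem_biUnion (Finset.mem_univ ⟨p, hp⟩) hvp)⟩

theorem inf_sup_span_singleton_le {T π : Submodule F V} {v : V} (hv : v ∉ T ⊔ π) :
    π ⊓ (T ⊔ F ∙ v) ≤ T := by
  rintro y ⟨hyπ, hyW⟩
  obtain ⟨a, haT, b, hb, rfl⟩ := mem_sup.mp hyW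
  obtain ⟨c, rfl⟩ := mem_span_singleton.mp hb
  obtain rfl | hc := eq_or_ne c 0
  · simpa using haT
  refine absurd ((smul_mem_iff _ hc).mp ?_) hv
  rw [← add_sub_cancel_left a (c • v)]
  exact sub_mem (mem_sup_right hyπ) (mem_sup_left haT)

variable [FiniteDimensional F V]

theorem exists_finrank_eq_of_le_of_le {p r : Submodule F V} (hpr : p ≤ r) {n : ℕ}
    (hp : finrank F p ≤ n) (hr : n ≤ finrank F r) :
    ∃ q : Submodule F V, p ≤ q ∧ q ≤ r ∧ finrank F q = n := by
  induction n with
  | zero => exact ⟨p, le_rfl, hpr, by omega⟩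
  | succ n ih =>
    obtain hp | hp := hp.eq_or_lt
    · exact ⟨p, le_rfl, hpr, hp⟩
    obtain ⟨q, hpq, hqr, hq⟩ := ih (by omega) (by omega)
    obtain ⟨x, hxr, hxq⟩ := SetLike.exists_of_lt (hqr.lt_of_ne (by rintro rfl; omega))
    exact ⟨q ⊔ F ∙ x, le_sup_of_le_left hpq,
      sup_le hqr ((span_singleton_le_iff_mem x r).mpr hxr),
      by rw [finrank_sup_span_singleton hxq, hq]⟩

theorem finrank_add_finrank_le_finrank_add_finrank_inf (a b : Submodule F V) :
    finrank F a + finrank F b ≤ finrank F V + finrank F ↥(a ⊓ b) := by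
  have := finrank_sup_add_finrank_inf_eq a b
  have := finrank_le (a ⊔ b)
  omega

theorem inf_ne_bot_of_finrank_lt_add {a b c : Submodule F V} (ha : a ≤ c) (hb : b ≤ c)
    (h : finrank F c < finrank F a + finrank F b) : a ⊓ b ≠ ⊥ := by
  intro hab
  have := finrank_sup_add_finrank_inf_eq a b
  have := finrank_mono (sup_le ha hb)
  rw [hab, finrank_bot] at *
  omega

theorem sup_ne_top_of_inf_ne_bot {a b : Submodule F V}
    (h : finrank F a + finrank F b ≤ finrank F V) (hab : a ⊓ b ≠ ⊥) : a ⊔ b ≠ ⊤ := by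
  intro htop
  have := finrank_sup_add_finrank_inf_eq a b
  rw [htop, finrank_top] at this
  exact hab (finrank_eq_zero.mp (by omega))

theorem finrank_finset_sup_le_sum {ι : Type*} (t : Finset ι) (u : ι → Submodule F V) :
    finrank F ↥(t.sup u) ≤ ∑ i ∈ t, finrank F (u i) := by
  classical
  induction t using Finset.induction_on with
  | empty => simp
  | insert i t hi ih =>
    rw [Finset.sup_insert, Finset.sum_insert hi]
    exact (finrank_add_le_finrank_add_finrank _ _).trans (by omega)

theorem exists_le_finrank_eq_forall_le_finrank_inf (H : Submodule F V)
    (t : Finset (Submodule F V)) {d m : ℕ} (ht : ∀ p ∈ t, d ≤ finrank F ↥(p ⊓ H))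
    (hm : t.card * d ≤ m) (hmH : m ≤ finrank F H) :
    ∃ H' ≤ H, finrank F H' = m ∧ ∀ p ∈ t, d ≤ finrank F ↥(p ⊓ H') := by
  choose u hu using fun p (hp : p ∈ t) =>
    exists_finrank_eq_of_le_of_le bot_le (by simp) (ht p hp)
  let U := t.attach.sup fun p => u p.1 p.2
  have hUH : U ≤ H := Finset.sup_le fun p _ => (hu p.1 p.2).2.1.trans inf_le_right
  have hU : finrank F U ≤ m := by
    refine (finrank_finset_sup_le_sum _ _).trans (le_of_eq_of_le ?_ hm)
    rw [Finset.sum_congr rfl fun p _ => (hu p.1 p.2).2.2, Finset.sum_const, Finset.card_attach,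
      smul_eq_mul]
  obtain ⟨H', hUH', hH'H, hH'⟩ := exists_finrank_eq_of_le_of_le hUH hU hmH
  refine ⟨H', hH'H, hH', fun p hp => ?_⟩
  have hup : u p hp ≤ p ⊓ H' :=
    le_inf ((hu p hp).2.1.trans inf_le_left) (le_trans (Finset.le_sup (f := fun p => u p.1 p.2)
      (Finset.mem_attach t ⟨p, hp⟩)) hUH')
  exact (hu p hp).2.2.symm.le.trans (finrank_mono hup)

end Submodule

namespace HP

variable {F V : Type*} [Field F] [AddCommGroup V] [Module F V] [FiniteDimensional F V]

theorem not_strongBlock_of_forall_notMem_sup {K : Set (Submodule F V)} {T : Submodule F V}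
    {v : V} (hvT : v ∉ T) (hv : ∀ π ∈ K, v ∉ T ⊔ π) {N k : ℕ}
    (hNk : N - k + 1 = finrank F T + 1) :
    ¬ StrongBlock F V N k (⋃ π ∈ K, ptsIn F V π) := by
  intro hK
  have hspan := hK (T ⊔ F ∙ v) (by rw [Submodule.finrank_sup_span_singleton hvT, hNk])
  have hle : spanPts F V ((⋃ π ∈ K, ptsIn F V π) ∩ ptsIn F V (T ⊔ F ∙ v)) ≤ T := by
    refine iSup₂_le fun P ⟨hPK, hPW⟩ => ?_
    obtain ⟨π, hπ, hPπ⟩ := Set.mem_iUnion₂.mp hPK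
    exact (le_inf hPπ hPW).trans (Submodule.inf_sup_span_singleton_le (hv π hπ))
  exact hvT ((hspan ▸ hle) (Submodule.mem_sup_right (Submodule.mem_span_singleton_self v)))

theorem exists_transversal (hV : finrank F V = 6) {π₁ π₂ : Submodule F V}
    (h₁ : finrank F π₁ = 3) (h₂ : finrank F π₂ = 3) (h₁₂ : π₁ ⊓ π₂ ≠ ⊥)
    (s : Finset (Submodule F V)) (hs : s.card ≤ 5) (hsd : ∀ p ∈ s, finrank F p = 3) :
    ∃ T H : Submodule F V, finrank F T = 3 ∧ finrank F H = 5 ∧ T ≤ H ∧ π₁ ⊔ π₂ ≤ H ∧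
      ∀ p ∈ s, T ⊓ p ≠ ⊥ := by
  have hinf (p W : Submodule F V) :=
    Submodule.finrank_add_finrank_le_finrank_add_finrank_inf p W
  have h₁₂rank : finrank F ↥(π₁ ⊔ π₂) ≤ 5 := by
    have := Submodule.finrank_sup_add_finrank_inf_eq π₁ π₂
    have := Submodule.one_le_finrank_iff.mpr h₁₂
    omega
  obtain ⟨H, h₁₂H, -, hH⟩ := Submodule.exists_finrank_eq_of_le_of_le le_top h₁₂rank
    (by rw [finrank_top, hV]; omega)
  have hsH (p) (hp : p ∈ s) : 2 ≤ finrank F ↥(p ⊓ H) := by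
    have := hinf p H
    rw [hsd p hp, hH, hV] at this
    omega
  obtain ⟨r, hrs, hr⟩ := Finset.exists_subset_card_eq (min_le_right 2 s.card)
  obtain ⟨H', hH'H, hH', hrH'⟩ := Submodule.exists_le_finrank_eq_forall_le_finrank_inf H r
    (fun p hp => hsH p (hrs hp)) (by omega) (by omega : 4 ≤ finrank F H)
  have hsH' (p) (hp : p ∈ s) : 1 ≤ finrank F ↥(p ⊓ H') := by
    have := hinf p H'
    rw [hsd p hp, hH', hV] at this
    omega
  obtain ⟨T, hTH', hT, hsrT⟩ :=
    Submodule.exists_le_finrank_eq_forall_le_finrank_inf H' (s \ r)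
      (fun p hp => hsH' p (Finset.sdiff_subset hp))
      (by rw [Finset.card_sdiff_of_subset hrs]; omega) (by omega : 3 ≤ finrank F H')
  refine ⟨T, H, hT, hH, hTH'.trans hH'H, h₁₂H, fun p hp => ?_⟩
  by_cases hpr : p ∈ r
  · have hTpH' := Submodule.inf_ne_bot_of_finrank_lt_add hTH' (inf_le_right : p ⊓ H' ≤ H')
      (by rw [hT, hH']; have := hrH' p hpr; omega)
    exact ne_bot_of_le_ne_bot hTpH' (inf_le_inf_left T inf_le_left)
  · rw [inf_comm, ← Submodule.one_le_finrank_iff]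
    exact hsrT p (Finset.mem_sdiff.mpr ⟨hp, hpr⟩)

theorem not_strongBlock_of_inf_ne_bot [Fintype F] (hq : 7 ≤ Fintype.card F)
    (hV : finrank F V = 6) {π₁ π₂ : Submodule F V} (h₁ : finrank F π₁ = 3)
    (h₂ : finrank F π₂ = 3) (h₁₂ : π₁ ⊓ π₂ ≠ ⊥) (s : Finset (Submodule F V)) (hs : s.card ≤ 5)
    (hsd : ∀ p ∈ s, finrank F p = 3) :
    ¬ StrongBlock F V 5 2
      (⋃ π ∈ insert π₁ (insert π₂ (s : Set (Submodule F V))), ptsIn F V π) := by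
  classical
  obtain ⟨T, H, hT, hH, hTH, h₁₂H, hTs⟩ := exists_transversal hV h₁ h₂ h₁₂ s hs hsd
  -- The covering bound needs fewer than `q` subspaces, so `⟨T, π₁⟩, ⟨T, π₂⟩ ≤ H` give way to `H`.
  set cover := insert H (s.image (T ⊔ ·))
  have hproper : ∀ W ∈ cover, W ≠ ⊤ := by
    simp only [cover, Finset.mem_insert, Finset.mem_image]
    rintro _ (rfl | ⟨p, hp, rfl⟩)
    · exact fun h => by rw [h, finrank_top, hV] at hH; omega
    · exact Submodule.sup_ne_top_of_inf_ne_bot (by rw [hT, hsd p hp, hV]) (hTs p hp)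
  have hcover : cover.card < Fintype.card F := (Finset.card_insert_le _ _).trans_lt <| by
    have := Finset.card_image_le (s := s) (f := (T ⊔ ·))
    omega
  obtain ⟨v, hv⟩ := Submodule.exists_forall_notMem_of_card_lt cover hproper hcover
  have hvH : v ∉ H := hv H (Finset.mem_insert_self _ _)
  refine not_strongBlock_of_forall_notMem_sup (fun hvT => hvH (hTH hvT)) (fun π hπ => ?_)
    (by rw [hT])
  rcases hπ with rfl | rfl | hπs
  · exact fun h => hvH (sup_le hTH (le_sup_left.trans h₁₂H) h)
  · exact fun h => hvH (sup_le hTH (le_sup_right.trans h₁₂H) h)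
  · exact hv _ (Finset.mem_insert_of_mem (Finset.mem_image_of_mem _ hπs))

end HP

/-- for `q ≥ 7`, any seven planes of `PG(5,q)` in higgledy-piggledy
arrangement are pairwise disjoint. -/
theorem stmt_16 (F : Type*) [Field F] [Fintype F] (hq : 7 ≤ Fintype.card F)
    (K : Set (Submodule F (Fin 6 → F)))
    (hdim : ∀ π ∈ K, finrank F π = 3)
    (hcard : K.ncard = 7)
    (hK : StrongBlock F (Fin 6 → F) 5 2 (⋃ π ∈ K, ptsIn F (Fin 6 → F) π)) :
    ∀ π₁ ∈ K, ∀ π₂ ∈ K, π₁ ≠ π₂ → π₁ ⊓ π₂ = ⊥ := by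
  classical
  intro π₁ h₁ π₂ h₂ h₁₂
  by_contra hmeet
  have hfin : K.Finite := Set.finite_of_ncard_ne_zero (by omega)
  set s := (hfin.toFinset.erase π₁).erase π₂
  have hs : s.card = 5 := by
    rw [Finset.card_erase_of_mem (by simpa [s] using ⟨h₁₂.symm, h₂⟩),
      Finset.card_erase_of_mem (by simpa using h₁), ← Set.ncard_eq_toFinset_card K hfin, hcard]
  have hKs : K = insert π₁ (insert π₂ (s : Set (Submodule F (Fin 6 → F)))) := by
    ext π
    by_cases hπ₁ : π = π₁ <;> by_cases hπ₂ : π = π₂ <;> simp_all [s]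
  exact not_strongBlock_of_inf_ne_bot hq (by simp) (hdim π₁ h₁) (hdim π₂ h₂) hmeet s hs.le
    (fun p hp => hdim p (hKs ▸ Or.inr (Or.inr hp))) (hKs ▸ hK)
end

section
/- In PG(4,q), consider three solids Σ₁, Σ₂, Σ₃ meeting in a common line m, with planes π_ij = Σ_i ∩ Σ_j and chosen points and four lines ℓ₁₁, ℓ₁₂, ℓ₂₁, ℓ₂₂ as in the paper's Configuration 1. Then every plane of PG(4,q) meeting all four lines ℓ₁₁, ℓ₁₂, ℓ₂₁, ℓ₂₂ either (1) intersects Σ₃ in a line of π₁₃ through M₂ different from m, (2) intersects Σ₃ in a line of π₂₃ through M₁ different from m, (3) equals π₁₂, or (4) intersects π₁₂ in exactly one point not contained in ⟨M_i,P₁₂⟩ \ {M_i, P₁₂} for i ∈ {1,2}; moreover, for every point A ∈ π₁₂ \ (⟨M₁,P₁₂⟩ ∪ ⟨M₂,P₁₂⟩) there is a unique such plane meeting π₁₂ in exactly the point A. -/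
open Module

open HP

/-! Each solid `Σᵢ` is spanned by the skew lines `ℓᵢ₁, ℓᵢ₂`, which meet the other solid in `Mᵢ`
and `P₁₂`. A plane inside `Σ₁` therefore meets `ℓ₂₁, ℓ₂₂` in `M₂, P₁₂`: it is `π₁₂ = ⟨m, P₁₂⟩`
or meets `Σ₃` in a line through `M₂`; likewise inside `Σ₂`. Any other plane `α` meets `Σ₁` and
`Σ₂` in lines, and these cannot coincide (the common line would contain `M₁, M₂, P₁₂`), so `α`
meets `π₁₂` in a single point `A`. Now `α ∩ Σᵢ` is the unique line through `A` meeting `ℓᵢ₁` and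
`ℓᵢ₂`, and this transversal lies in `π₁₂` exactly when `A ∈ ⟨Mᵢ, P₁₂⟩` (it is then that line).
Conversely, for `A` off both lines `⟨Mᵢ, P₁₂⟩` the two transversals through `A` meet only in
`A` and span the unique plane. -/

open Submodule

namespace Submodule

variable {K V : Type*} [Field K] [AddCommGroup V] [Module K V] [FiniteDimensional K V]

theorem finrank_add_finrank_le_finrank_inf_add (s t : Submodule K V) :
    finrank K s + finrank K t ≤ finrank K ↥(s ⊓ t) + finrank K V := by
  have := finrank_sup_add_finrank_inf_eq s t
  have := (s ⊔ t).finrank_le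
  omega

theorem finrank_inf_add_one_of_not_le {s H : Submodule K V}
    (hH : finrank K H + 1 = finrank K V) (hs : ¬ s ≤ H) :
    finrank K ↥(s ⊓ H) + 1 = finrank K s := by
  have := finrank_lt_finrank_of_lt (right_lt_sup.2 hs)
  have := finrank_sup_add_finrank_inf_eq s H
  have := (s ⊔ H).finrank_le
  omega

theorem inf_ne_bot_of_finrank_lt_s17 {s t W : Submodule K V} (hs : s ≤ W) (ht : t ≤ W)
    (h : finrank K W < finrank K s + finrank K t) : s ⊓ t ≠ ⊥ := by
  intro hst
  have := finrank_sup_add_finrank_inf_eq s t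
  have := finrank_mono (sup_le hs ht)
  rw [hst, finrank_bot] at *
  omega

theorem finrank_sup_of_isAtom {s p : Submodule K V} (hp : IsAtom p) (hps : ¬ p ≤ s) :
    finrank K ↥(s ⊔ p) = finrank K s + 1 := by
  have := finrank_sup_add_finrank_inf_eq s p
  rw [inf_comm, (hp.not_le_iff_disjoint.1 hps).eq_bot, finrank_bot,
    isAtom_iff_finrank_eq_one.1 hp] at this
  omega

theorem sup_eq_of_isAtom {s t p : Submodule K V} (hp : IsAtom p) (hps : ¬ p ≤ s)
    (hst : s ≤ t) (hpt : p ≤ t) (ht : finrank K t = finrank K s + 1) : s ⊔ p = t :=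
  eq_of_le_of_finrank_le (sup_le hst hpt) (by rw [finrank_sup_of_isAtom hp hps, ht])

theorem inf_eq_of_finrank_eq_two {l W p : Submodule K V} (hl : finrank K l = 2)
    (hlW : ¬ l ≤ W) (hp : IsAtom p) (hpl : p ≤ l) (hpW : p ≤ W) : l ⊓ W = p := by
  have := finrank_lt_finrank_of_lt (inf_lt_left.2 hlW)
  have := finrank_mono (le_inf hpl hpW)
  exact (eq_of_le_of_finrank_le (le_inf hpl hpW)
    (by rw [isAtom_iff_finrank_eq_one.1 hp] at *; omega)).symm

end Submodule

section Transversal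

variable {K V : Type*} [Field K] [AddCommGroup V] [Module K V]

structure IsTransversal (b A l l' : Submodule K V) : Prop where
  finrank_eq : finrank K b = 2
  le : A ≤ b
  inf_left_ne_bot : b ⊓ l ≠ ⊥
  inf_right_ne_bot : b ⊓ l' ≠ ⊥

variable {A b l l' : Submodule K V}

theorem IsTransversal.symm (hb : IsTransversal b A l l') : IsTransversal b A l' l :=
  ⟨hb.finrank_eq, hb.le, hb.inf_right_ne_bot, hb.inf_left_ne_bot⟩

variable [FiniteDimensional K V]

theorem IsTransversal.le_sup (hb : IsTransversal b A l l') (hA : IsAtom A) (hAl : ¬ A ≤ l) :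
    b ≤ A ⊔ l := by
  have hlt : A < A ⊔ b ⊓ l := left_lt_sup.2 fun h =>
    hAl ((hA.le_iff_eq hb.inf_left_ne_bot).1 h ▸ inf_le_right)
  have := finrank_lt_finrank_of_lt hlt
  rw [isAtom_iff_finrank_eq_one.1 hA] at this
  have hb' : A ⊔ b ⊓ l = b :=
    eq_of_le_of_finrank_le (sup_le hb.le inf_le_left) (by rw [hb.finrank_eq]; omega)
  exact hb'.ge.trans (sup_le_sup_left inf_le_right A)

theorem finrank_sup_inf_sup (hA : IsAtom A) (hAl : ¬ A ≤ l) (hAl' : ¬ A ≤ l')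
    (hll' : l ⊓ l' = ⊥) (hAll' : A ≤ l ⊔ l') : finrank K ↥((A ⊔ l) ⊓ (A ⊔ l')) = 2 := by
  have hsup : (A ⊔ l) ⊔ (A ⊔ l') = l ⊔ l' :=
    le_antisymm (sup_le (sup_le hAll' le_sup_left) (sup_le hAll' le_sup_right))
      (sup_le_sup le_sup_right le_sup_right)
  have := finrank_sup_add_finrank_inf_eq (A ⊔ l) (A ⊔ l')
  have := finrank_sup_add_finrank_inf_eq l l'
  rw [hsup, sup_comm A l, sup_comm A l', finrank_sup_of_isAtom hA hAl,
    finrank_sup_of_isAtom hA hAl'] at *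
  rw [hll', finrank_bot] at *
  omega

theorem existsUnique_isTransversal (hA : IsAtom A) (hAl : ¬ A ≤ l) (hAl' : ¬ A ≤ l')
    (hll' : l ⊓ l' = ⊥) (hAll' : A ≤ l ⊔ l') : ∃! b, IsTransversal b A l l' := by
  have hr := finrank_sup_inf_sup hA hAl hAl' hll' hAll'
  have hl := finrank_sup_of_isAtom hA hAl
  have hl' := finrank_sup_of_isAtom hA hAl'
  rw [sup_comm] at hl hl'
  refine ⟨(A ⊔ l) ⊓ (A ⊔ l'), ⟨hr, le_inf le_sup_left le_sup_left, ?_, ?_⟩, fun b hb => ?_⟩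
  · exact inf_ne_bot_of_finrank_lt_s17 inf_le_left le_sup_right (by omega)
  · exact inf_ne_bot_of_finrank_lt_s17 inf_le_right le_sup_right (by omega)
  · exact eq_of_le_of_finrank_le (le_inf (hb.le_sup hA hAl) (hb.symm.le_sup hA hAl'))
      (by rw [hr, hb.finrank_eq])

end Transversal

section SkewPair

variable {K V : Type*} [Field K] [AddCommGroup V] [Module K V]

/-- Configuration 1 consists of the two instances `(Σ₁, Σ₂, ℓ₁₁, ℓ₁₂, M₁, P₁₂)` and
`(Σ₂, Σ₁, ℓ₂₁, ℓ₂₂, M₂, P₁₂)`. -/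
structure SkewPair (S T l l' M P : Submodule K V) : Prop where
  finrank_left : finrank K l = 2
  finrank_right : finrank K l' = 2
  inf_eq_bot : l ⊓ l' = ⊥
  sup_eq : l ⊔ l' = S
  isAtom_left : IsAtom M
  isAtom_right : IsAtom P
  left_inf : l ⊓ T = M
  right_inf : l' ⊓ T = P

namespace SkewPair

variable {S T l l' M P A b α : Submodule K V}

theorem left_le (h : SkewPair S T l l' M P) : l ≤ S := h.sup_eq ▸ le_sup_left

theorem right_le (h : SkewPair S T l l' M P) : l' ≤ S := h.sup_eq ▸ le_sup_right

theorem inf_inf_left (h : SkewPair S T l l' M P) (α : Submodule K V) : α ⊓ S ⊓ l = α ⊓ l := by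
  rw [inf_assoc, inf_eq_right.2 h.left_le]

theorem inf_inf_right (h : SkewPair S T l l' M P) (α : Submodule K V) :
    α ⊓ S ⊓ l' = α ⊓ l' := by
  rw [inf_assoc, inf_eq_right.2 h.right_le]

theorem le_of_inf_left_ne_bot (h : SkewPair S T l l' M P) (hbT : b ≤ T) (hbl : b ⊓ l ≠ ⊥) :
    M ≤ b :=
  (h.isAtom_left.le_iff_eq hbl).1 (h.left_inf ▸ le_inf inf_le_right (inf_le_left.trans hbT))
    ▸ inf_le_left

theorem le_of_inf_right_ne_bot (h : SkewPair S T l l' M P) (hbT : b ≤ T) (hbl' : b ⊓ l' ≠ ⊥) :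
    P ≤ b :=
  (h.isAtom_right.le_iff_eq hbl').1 (h.right_inf ▸ le_inf inf_le_right (inf_le_left.trans hbT))
    ▸ inf_le_left

theorem not_le_left (h : SkewPair S T l l' M P) (hA : A ≠ ⊥) (hAT : A ≤ T) (hAM : A ≠ M) :
    ¬ A ≤ l :=
  fun hAl => hAM ((h.isAtom_left.le_iff_eq hA).1 (h.left_inf ▸ le_inf hAl hAT))

theorem not_le_right (h : SkewPair S T l l' M P) (hA : A ≠ ⊥) (hAT : A ≤ T) (hAP : A ≠ P) :
    ¬ A ≤ l' :=
  fun hAl' => hAP ((h.isAtom_right.le_iff_eq hA).1 (h.right_inf ▸ le_inf hAl' hAT))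

variable [FiniteDimensional K V]

theorem of_sup (hS : finrank K S = 4) (hl : finrank K l = 2) (hlS : l ≤ S) (hlT : ¬ l ≤ T)
    (hM : IsAtom M) (hMl : M ≤ l) (hMT : M ≤ T) {Q : Submodule K V} (hP : IsAtom P)
    (hQ : IsAtom Q) (hPS : P ≤ S) (hPT : P ≤ T) (hQS : Q ≤ S) (hQT : ¬ Q ≤ T)
    (hskew : l ⊓ (P ⊔ Q) = ⊥) : SkewPair S T l (P ⊔ Q) M P := by
  have hPQ : finrank K ↥(P ⊔ Q) = 2 := by
    rw [finrank_sup_of_isAtom hQ fun h => hQT (h.trans hPT), isAtom_iff_finrank_eq_one.1 hP]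
  refine ⟨hl, hPQ, hskew, ?_, hM, hP, inf_eq_of_finrank_eq_two hl hlT hM hMl hMT, ?_⟩
  · refine eq_of_le_of_finrank_le (sup_le hlS (sup_le hPS hQS)) ?_
    have := finrank_sup_add_finrank_inf_eq l (P ⊔ Q)
    rw [hskew, finrank_bot] at this
    omega
  · rw [sup_inf_assoc_of_le Q hPT, (hQ.not_le_iff_disjoint.1 hQT).eq_bot, sup_bot_eq]

theorem finrank_eq (h : SkewPair S T l l' M P) : finrank K S = 4 := by
  have := finrank_sup_add_finrank_inf_eq l l'
  rw [h.sup_eq, h.inf_eq_bot, finrank_bot, h.finrank_left, h.finrank_right] at this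
  omega

theorem existsUnique_isTransversal (h : SkewPair S T l l' M P) (hA : IsAtom A) (hAS : A ≤ S)
    (hAT : A ≤ T) (hAM : A ≠ M) (hAP : A ≠ P) : ∃! b, IsTransversal b A l l' :=
  _root_.existsUnique_isTransversal hA (h.not_le_left hA.ne_bot hAT hAM)
    (h.not_le_right hA.ne_bot hAT hAP) h.inf_eq_bot (h.sup_eq ▸ hAS)

theorem isTransversal_le (h : SkewPair S T l l' M P) (hb : IsTransversal b A l l')
    (hA : IsAtom A) (hAS : A ≤ S) (hAT : A ≤ T) (hAM : A ≠ M) : b ≤ S :=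
  (hb.le_sup hA (h.not_le_left hA.ne_bot hAT hAM)).trans (sup_le hAS h.left_le)

-- A transversal inside `T` contains `M` and `P`, so it is `MP`; conversely `MP` is the
-- transversal through `A` as soon as it contains `A`.
theorem isTransversal_le_iff (h : SkewPair S T l l' M P) (hb : IsTransversal b A l l')
    (hA : IsAtom A) (hAS : A ≤ S) (hAT : A ≤ T) (hAM : A ≠ M) (hAP : A ≠ P) :
    b ≤ T ↔ A ≤ M ⊔ P := by
  have hMP : finrank K ↥(M ⊔ P) = 2 := by
    refine (finrank_sup_of_isAtom h.isAtom_right fun hPM => h.isAtom_right.ne_bot ?_).trans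
      (by rw [isAtom_iff_finrank_eq_one.1 h.isAtom_left])
    exact le_bot_iff.1 (h.inf_eq_bot ▸ le_inf (hPM.trans (h.left_inf ▸ inf_le_left))
      (h.right_inf ▸ inf_le_left))
  constructor
  · intro hbT
    have : M ⊔ P = b := eq_of_le_of_finrank_le
      (sup_le (h.le_of_inf_left_ne_bot hbT hb.inf_left_ne_bot)
        (h.le_of_inf_right_ne_bot hbT hb.inf_right_ne_bot)) (by rw [hMP, hb.finrank_eq])
    exact this ▸ hb.le
  · intro hAMP
    have hMPt : IsTransversal (M ⊔ P) A l l' :=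
      ⟨hMP, hAMP,
        ne_bot_of_le_ne_bot h.isAtom_left.ne_bot (le_inf le_sup_left (h.left_inf ▸ inf_le_left)),
        ne_bot_of_le_ne_bot h.isAtom_right.ne_bot (le_inf le_sup_right (h.right_inf ▸ inf_le_left))⟩
    rw [(h.existsUnique_isTransversal hA hAS hAT hAM hAP).unique hb hMPt]
    exact sup_le (h.left_inf ▸ inf_le_right) (h.right_inf ▸ inf_le_right)

theorem isTransversal_inf_eq (h : SkewPair S T l l' M P) (hb : IsTransversal b A l l')
    (hA : IsAtom A) (hAS : A ≤ S) (hAT : A ≤ T) (hAMP : ¬ A ≤ M ⊔ P) : b ⊓ T = A :=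
  inf_eq_of_finrank_eq_two hb.finrank_eq
    (fun hbT => hAMP ((h.isTransversal_le_iff hb hA hAS hAT (fun e => hAMP (e ▸ le_sup_left))
      (fun e => hAMP (e ▸ le_sup_right))).1 hbT)) hA hb.le hAT

theorem finrank_inf_eq_two (h : SkewPair S T l l' M P) (hV : finrank K V = 5)
    (hα : finrank K α = 3) (hαS : ¬ α ≤ S) : finrank K ↥(α ⊓ S) = 2 := by
  have := finrank_inf_add_one_of_not_le (by rw [h.finrank_eq, hV]) hαS
  omega

theorem isTransversal_inf (h : SkewPair S T l l' M P) (hV : finrank K V = 5)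
    (hα : finrank K α = 3) (hαS : ¬ α ≤ S) (hαl : α ⊓ l ≠ ⊥) (hαl' : α ⊓ l' ≠ ⊥)
    (hA : A ≤ α ⊓ S) : IsTransversal (α ⊓ S) A l l' :=
  ⟨h.finrank_inf_eq_two hV hα hαS, hA, h.inf_inf_left α ▸ hαl, h.inf_inf_right α ▸ hαl'⟩

theorem eq_or_eq_of_le_sup (h : SkewPair S T l l' M P) (hV : finrank K V = 5)
    (hα : finrank K α = 3) (hαS : ¬ α ≤ S) (hαl : α ⊓ l ≠ ⊥) (hαl' : α ⊓ l' ≠ ⊥)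
    (hA : IsAtom A) (hαA : α ⊓ S ⊓ T = A) (hAMP : A ≤ M ⊔ P) : A = M ∨ A = P := by
  subst hαA
  by_contra! hne
  have hb := h.isTransversal_inf hV hα hαS hαl hαl' (inf_le_left : α ⊓ S ⊓ T ≤ α ⊓ S)
  have hbT := (h.isTransversal_le_iff hb hA (inf_le_left.trans inf_le_right) inf_le_right
    hne.1 hne.2).2 hAMP
  have := finrank_mono (le_inf le_rfl hbT : α ⊓ S ≤ α ⊓ S ⊓ T)
  rw [hb.finrank_eq, isAtom_iff_finrank_eq_one.1 hA] at this
  omega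

end SkewPair

end SkewPair

section Configuration

variable {K V : Type*} [Field K] [AddCommGroup V] [Module K V] [FiniteDimensional K V]
  {S₁ S₂ ℓ₁₁ ℓ₁₂ ℓ₂₁ ℓ₂₂ M₁ M₂ P α A : Submodule K V}

theorem eq_or_finrank_inf_eq_two {π m S₃ M : Submodule K V} (hV : finrank K V = 5)
    (hα : finrank K α = 3) (hπ : finrank K π = 3) (hS₃ : finrank K S₃ = 4) (hmP : m ⊔ P = π)
    (hmS₃ : m ≤ S₃) (hPS₃ : ¬ P ≤ S₃) (hMm : M ≤ m) (hMα : M ≤ α) (hPα : P ≤ α) :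
    α = π ∨ finrank K ↥(α ⊓ S₃) = 2 ∧ M ≤ α ⊓ S₃ ∧ α ⊓ S₃ ≠ m := by
  by_cases hm : m ≤ α
  · exact .inl (eq_of_le_of_finrank_le (hmP ▸ sup_le hm hPα) (by omega)).symm
  · refine .inr ⟨?_, le_inf hMα (hMm.trans hmS₃), fun h => hm (h ▸ inf_le_left)⟩
    have := finrank_inf_add_one_of_not_le (by rw [hS₃, hV]) fun h => hPS₃ (hPα.trans h)
    omega

theorem not_le_of_finrank_inf_eq_one (hV : finrank K V = 5) (hS₁ : finrank K S₁ = 4)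
    (hS₂ : finrank K S₂ = 4) (hα : finrank K α = 3) (hαA : finrank K ↥(α ⊓ (S₁ ⊓ S₂)) = 1) :
    ¬ α ≤ S₁ ∧ ¬ α ≤ S₂ := by
  have h₁ := finrank_add_finrank_le_finrank_inf_add α S₁
  have h₂ := finrank_add_finrank_le_finrank_inf_add α S₂
  constructor
  · intro h
    rw [← inf_assoc, inf_eq_left.2 h] at hαA
    omega
  · intro h
    rw [inf_comm S₁, ← inf_assoc, inf_eq_left.2 h] at hαA
    omega

theorem finrank_inf_eq_one_of_not_le (h₁ : SkewPair S₁ S₂ ℓ₁₁ ℓ₁₂ M₁ P)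
    (h₂ : SkewPair S₂ S₁ ℓ₂₁ ℓ₂₂ M₂ P) (hV : finrank K V = 5) (hπ : M₁ ⊔ M₂ ⊔ P = S₁ ⊓ S₂)
    (hπr : finrank K ↥(S₁ ⊓ S₂) = 3) (hα : finrank K α = 3) (hα₁ : ¬ α ≤ S₁)
    (hα₂ : ¬ α ≤ S₂) (h11 : α ⊓ ℓ₁₁ ≠ ⊥) (h12 : α ⊓ ℓ₁₂ ≠ ⊥) (h21 : α ⊓ ℓ₂₁ ≠ ⊥) :
    finrank K ↥(α ⊓ (S₁ ⊓ S₂)) = 1 := by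
  have r₁ := h₁.finrank_inf_eq_two hV hα hα₁
  have r₂ := h₂.finrank_inf_eq_two hV hα hα₂
  have := finrank_add_finrank_le_finrank_inf_add α (S₁ ⊓ S₂)
  by_contra hne
  have e₁ : α ⊓ (S₁ ⊓ S₂) = α ⊓ S₁ :=
    eq_of_le_of_finrank_le (inf_le_inf_left α inf_le_left) (by omega)
  have e₂ : α ⊓ (S₁ ⊓ S₂) = α ⊓ S₂ :=
    eq_of_le_of_finrank_le (inf_le_inf_left α inf_le_right) (by omega)
  -- otherwise the line `α ⊓ S₁ = α ⊓ S₂` would contain `M₁`, `M₂`, `P`, which span `S₁ ⊓ S₂`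
  have hle : M₁ ⊔ M₂ ⊔ P ≤ α ⊓ (S₁ ⊓ S₂) := by
    refine sup_le (sup_le ?_ ?_) ?_
    · exact h₁.le_of_inf_left_ne_bot (inf_le_right.trans inf_le_right)
        (by rwa [e₁, h₁.inf_inf_left])
    · exact h₂.le_of_inf_left_ne_bot (inf_le_right.trans inf_le_left)
        (by rwa [e₂, h₂.inf_inf_left])
    · exact h₁.le_of_inf_right_ne_bot (inf_le_right.trans inf_le_right)
        (by rwa [e₁, h₁.inf_inf_right])
  have := finrank_mono hle
  rw [hπ, e₁, r₁, hπr] at this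
  omega

theorem existsUnique_plane_inf_eq (h₁ : SkewPair S₁ S₂ ℓ₁₁ ℓ₁₂ M₁ P)
    (h₂ : SkewPair S₂ S₁ ℓ₂₁ ℓ₂₂ M₂ P) (hV : finrank K V = 5) (hA : IsAtom A)
    (hAπ : A ≤ S₁ ⊓ S₂) (hA₁ : ¬ A ≤ M₁ ⊔ P) (hA₂ : ¬ A ≤ M₂ ⊔ P) :
    ∃! α : Submodule K V, finrank K α = 3 ∧ α ⊓ ℓ₁₁ ≠ ⊥ ∧ α ⊓ ℓ₁₂ ≠ ⊥ ∧ α ⊓ ℓ₂₁ ≠ ⊥ ∧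
      α ⊓ ℓ₂₂ ≠ ⊥ ∧ α ⊓ (S₁ ⊓ S₂) = A := by
  obtain ⟨hAS₁, hAS₂⟩ := le_inf_iff.1 hAπ
  have hne {M : Submodule K V} (h : ¬ A ≤ M ⊔ P) : A ≠ M ∧ A ≠ P :=
    ⟨fun e => h (e ▸ le_sup_left), fun e => h (e ▸ le_sup_right)⟩
  obtain ⟨a₁, ha₁, huniq₁⟩ :=
    h₁.existsUnique_isTransversal hA hAS₁ hAS₂ (hne hA₁).1 (hne hA₁).2
  obtain ⟨a₂, ha₂, huniq₂⟩ :=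
    h₂.existsUnique_isTransversal hA hAS₂ hAS₁ (hne hA₂).1 (hne hA₂).2
  have hS₁ := h₁.isTransversal_le ha₁ hA hAS₁ hAS₂ (hne hA₁).1
  have hS₂ := h₂.isTransversal_le ha₂ hA hAS₂ hAS₁ (hne hA₂).1
  have hT₁ := h₁.isTransversal_inf_eq ha₁ hA hAS₁ hAS₂ hA₁
  have hT₂ := h₂.isTransversal_inf_eq ha₂ hA hAS₂ hAS₁ hA₂
  have hinf : a₁ ⊓ a₂ = A := le_antisymm (hT₁ ▸ inf_le_inf_left a₁ hS₂) (le_inf ha₁.le ha₂.le)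
  have hα₁ : (a₁ ⊔ a₂) ⊓ S₁ = a₁ := by
    rw [sup_inf_assoc_of_le a₂ hS₁, hT₂, sup_eq_left.2 ha₁.le]
  have hr : finrank K ↥(a₁ ⊔ a₂) = 3 := by
    have := finrank_sup_add_finrank_inf_eq a₁ a₂
    rw [hinf, ha₁.finrank_eq, ha₂.finrank_eq, isAtom_iff_finrank_eq_one.1 hA] at this
    omega
  refine ⟨a₁ ⊔ a₂, ⟨hr, ?_, ?_, ?_, ?_, by rw [← inf_assoc, hα₁, hT₁]⟩, ?_⟩
  · exact ne_bot_of_le_ne_bot ha₁.inf_left_ne_bot (inf_le_inf_right ℓ₁₁ le_sup_left)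
  · exact ne_bot_of_le_ne_bot ha₁.inf_right_ne_bot (inf_le_inf_right ℓ₁₂ le_sup_left)
  · exact ne_bot_of_le_ne_bot ha₂.inf_left_ne_bot (inf_le_inf_right ℓ₂₁ le_sup_right)
  · exact ne_bot_of_le_ne_bot ha₂.inf_right_ne_bot (inf_le_inf_right ℓ₂₂ le_sup_right)
  rintro α ⟨hα, h11, h12, h21, h22, hαA⟩
  obtain ⟨hα₁', hα₂'⟩ := not_le_of_finrank_inf_eq_one hV h₁.finrank_eq h₂.finrank_eq hα
    (by rw [hαA, isAtom_iff_finrank_eq_one.1 hA])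
  have e₁ : α ⊓ S₁ = a₁ := huniq₁ _
    (h₁.isTransversal_inf hV hα hα₁' h11 h12 (hαA.ge.trans (inf_le_inf_left α inf_le_left)))
  have e₂ : α ⊓ S₂ = a₂ := huniq₂ _
    (h₂.isTransversal_inf hV hα hα₂' h21 h22 (hαA.ge.trans (inf_le_inf_left α inf_le_right)))
  exact (eq_of_le_of_finrank_le (sup_le (e₁ ▸ inf_le_left) (e₂ ▸ inf_le_left))
    (by rw [hα, hr])).symm

end Configuration

theorem stmt_17_general (F : Type*) [Field F]
    (Sg1 Sg2 Sg3 : Submodule F (Fin 5 → F))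
    (hSg1 : finrank F Sg1 = 4) (hSg2 : finrank F Sg2 = 4) (hSg3 : finrank F Sg3 = 4)
    (m π12 π13 π23 : Submodule F (Fin 5 → F))
    (hm : m = Sg1 ⊓ Sg2 ⊓ Sg3) (hmdim : finrank F m = 2)
    (hπ12 : π12 = Sg1 ⊓ Sg2) (hπ13 : π13 = Sg1 ⊓ Sg3) (hπ23 : π23 = Sg2 ⊓ Sg3)
    (hπ12dim : finrank F π12 = 3)
    (M1 M2 : Projectivization F (Fin 5 → F)) (hM : M1 ≠ M2)
    (hM1 : M1.submodule ≤ m) (hM2 : M2.submodule ≤ m)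
    (P12 P13 P23 : Projectivization F (Fin 5 → F))
    (hP12 : P12.submodule ≤ π12) (hP12m : ¬ P12.submodule ≤ m)
    (hP13 : P13.submodule ≤ π13) (hP13m : ¬ P13.submodule ≤ m)
    (hP23 : P23.submodule ≤ π23) (hP23m : ¬ P23.submodule ≤ m)
    (ℓ12 ℓ22 : Submodule F (Fin 5 → F))
    (hℓ12 : ℓ12 = P12.submodule ⊔ P13.submodule)
    (hℓ22 : ℓ22 = P12.submodule ⊔ P23.submodule)
    (ℓ11 ℓ21 : Submodule F (Fin 5 → F))
    (hℓ11dim : finrank F ℓ11 = 2) (hℓ11Sg : ℓ11 ≤ Sg1) (hℓ11M : M1.submodule ≤ ℓ11)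
    (hℓ11skew : ℓ11 ⊓ ℓ12 = ⊥) (hℓ11a : ¬ ℓ11 ≤ π12)
    (hℓ21dim : finrank F ℓ21 = 2) (hℓ21Sg : ℓ21 ≤ Sg2) (hℓ21M : M2.submodule ≤ ℓ21)
    (hℓ21skew : ℓ21 ⊓ ℓ22 = ⊥) (hℓ21a : ¬ ℓ21 ≤ π12) :
    (∀ α : Submodule F (Fin 5 → F), finrank F α = 3 →
      α ⊓ ℓ11 ≠ ⊥ → α ⊓ ℓ12 ≠ ⊥ → α ⊓ ℓ21 ≠ ⊥ → α ⊓ ℓ22 ≠ ⊥ →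
      (α ⊓ Sg3 ≤ π13 ∧ finrank F (α ⊓ Sg3 : Submodule F (Fin 5 → F)) = 2 ∧
        M2.submodule ≤ α ⊓ Sg3 ∧ α ⊓ Sg3 ≠ m) ∨
      (α ⊓ Sg3 ≤ π23 ∧ finrank F (α ⊓ Sg3 : Submodule F (Fin 5 → F)) = 2 ∧
        M1.submodule ≤ α ⊓ Sg3 ∧ α ⊓ Sg3 ≠ m) ∨
      (α = π12) ∨
      (finrank F (α ⊓ π12 : Submodule F (Fin 5 → F)) = 1 ∧
        (α ⊓ π12 ≤ M1.submodule ⊔ P12.submodule →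
          α ⊓ π12 = M1.submodule ∨ α ⊓ π12 = P12.submodule) ∧
        (α ⊓ π12 ≤ M2.submodule ⊔ P12.submodule →
          α ⊓ π12 = M2.submodule ∨ α ⊓ π12 = P12.submodule))) ∧
    (∀ A : Projectivization F (Fin 5 → F), A.submodule ≤ π12 →
      ¬ A.submodule ≤ M1.submodule ⊔ P12.submodule →
      ¬ A.submodule ≤ M2.submodule ⊔ P12.submodule →
      ∃! α : Submodule F (Fin 5 → F), finrank F α = 3 ∧
        α ⊓ ℓ11 ≠ ⊥ ∧ α ⊓ ℓ12 ≠ ⊥ ∧ α ⊓ ℓ21 ≠ ⊥ ∧ α ⊓ ℓ22 ≠ ⊥ ∧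
        α ⊓ π12 = A.submodule) := by
  subst hm hπ12 hπ13 hπ23 hℓ12 hℓ22
  have hV : finrank F (Fin 5 → F) = 5 := by simp
  have isAtom_pt (X : Projectivization F (Fin 5 → F)) : IsAtom X.submodule :=
    isAtom_iff_finrank_eq_one.2 X.finrank_submodule
  have h₁ : SkewPair Sg1 Sg2 ℓ11 _ M1.submodule P12.submodule :=
    .of_sup hSg1 hℓ11dim hℓ11Sg (fun h => hℓ11a (le_inf hℓ11Sg h)) (isAtom_pt M1) hℓ11M
      (hM1.trans (inf_le_left.trans inf_le_right)) (isAtom_pt P12) (isAtom_pt P13)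
      (hP12.trans inf_le_left) (hP12.trans inf_le_right) (hP13.trans inf_le_left)
      (fun h => hP13m (le_inf (le_inf (hP13.trans inf_le_left) h) (hP13.trans inf_le_right)))
      hℓ11skew
  have h₂ : SkewPair Sg2 Sg1 ℓ21 _ M2.submodule P12.submodule :=
    .of_sup hSg2 hℓ21dim hℓ21Sg (fun h => hℓ21a (le_inf h hℓ21Sg)) (isAtom_pt M2) hℓ21M
      (hM2.trans (inf_le_left.trans inf_le_left)) (isAtom_pt P12) (isAtom_pt P23)
      (hP12.trans inf_le_right) (hP12.trans inf_le_left) (hP23.trans inf_le_left)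
      (fun h => hP23m (le_inf (le_inf h (hP23.trans inf_le_left)) (hP23.trans inf_le_right)))
      hℓ21skew
  have hm : M1.submodule ⊔ M2.submodule = Sg1 ⊓ Sg2 ⊓ Sg3 :=
    sup_eq_of_isAtom (isAtom_pt M2) (fun h => hM (Projectivization.submodule_injective
      (((isAtom_pt M1).le_iff_eq (isAtom_pt M2).ne_bot).1 h)).symm) hM1 hM2
      (by rw [hmdim, M1.finrank_submodule])
  have hπ : Sg1 ⊓ Sg2 ⊓ Sg3 ⊔ P12.submodule = Sg1 ⊓ Sg2 :=
    sup_eq_of_isAtom (isAtom_pt P12) hP12m inf_le_left hP12 (by rw [hπ12dim, hmdim])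
  have hP12Sg3 : ¬ P12.submodule ≤ Sg3 := fun h => hP12m (le_inf hP12 h)
  refine ⟨fun α hα h11 h12 h21 h22 => ?_,
    fun A hA h1 h2 => existsUnique_plane_inf_eq h₁ h₂ hV (isAtom_pt A) hA h1 h2⟩
  by_cases hα₁ : α ≤ Sg1
  · rcases eq_or_finrank_inf_eq_two hV hα hπ12dim hSg3 hπ inf_le_right hP12Sg3 hM2
      (h₂.le_of_inf_left_ne_bot hα₁ h21) (h₂.le_of_inf_right_ne_bot hα₁ h22) with hπ12 | hline
    · exact .inr (.inr (.inl hπ12))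
    · exact .inl ⟨inf_le_inf_right Sg3 hα₁, hline⟩
  by_cases hα₂ : α ≤ Sg2
  · rcases eq_or_finrank_inf_eq_two hV hα hπ12dim hSg3 hπ inf_le_right hP12Sg3 hM1
      (h₁.le_of_inf_left_ne_bot hα₂ h11) (h₁.le_of_inf_right_ne_bot hα₂ h12) with hπ12 | hline
    · exact .inr (.inr (.inl hπ12))
    · exact .inr (.inl ⟨inf_le_inf_right Sg3 hα₂, hline⟩)
  have hA := finrank_inf_eq_one_of_not_le h₁ h₂ hV (hm ▸ hπ) hπ12dim hα hα₁ hα₂ h11 h12 h21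
  have hAt := isAtom_iff_finrank_eq_one.2 hA
  exact .inr (.inr (.inr ⟨hA, h₁.eq_or_eq_of_le_sup hV hα hα₁ h11 h12 hAt (inf_assoc _ _ _),
    h₂.eq_or_eq_of_le_sup hV hα hα₂ h21 h22 hAt (by rw [inf_right_comm, inf_assoc])⟩))

/-- classification of the planes of `PG(4,q)` meeting the four lines
`ℓ₁₁, ℓ₁₂, ℓ₂₁, ℓ₂₂` of Configuration 1. Such a plane (1) meets `Σ₃` in a line of
`π₁₃` through `M₂` different from `m`, or (2) meets `Σ₃` in a line of `π₂₃` through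
`M₁` different from `m`, or (3) equals `π₁₂`, or (4) meets `π₁₂` in exactly one point
not in `⟨Mᵢ,P₁₂⟩ \ {Mᵢ,P₁₂}` for `i ∈ {1,2}`; moreover, through every point
`A ∈ π₁₂ \ (⟨M₁,P₁₂⟩ ∪ ⟨M₂,P₁₂⟩)` there is a unique such plane meeting `π₁₂`
exactly in `A`. -/
theorem stmt_17 (F : Type*) [Field F] [Fintype F]
    (Sg1 Sg2 Sg3 : Submodule F (Fin 5 → F))
    (hSg1 : finrank F Sg1 = 4) (hSg2 : finrank F Sg2 = 4) (hSg3 : finrank F Sg3 = 4)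
    (m π12 π13 π23 : Submodule F (Fin 5 → F))
    (hm : m = Sg1 ⊓ Sg2 ⊓ Sg3) (hmdim : finrank F m = 2)
    (hπ12 : π12 = Sg1 ⊓ Sg2) (hπ13 : π13 = Sg1 ⊓ Sg3) (hπ23 : π23 = Sg2 ⊓ Sg3)
    (hπ12dim : finrank F π12 = 3) (hπ13dim : finrank F π13 = 3) (hπ23dim : finrank F π23 = 3)
    (M1 M2 : Projectivization F (Fin 5 → F)) (hM : M1 ≠ M2)
    (hM1 : M1.submodule ≤ m) (hM2 : M2.submodule ≤ m)
    (P12 P13 P23 : Projectivization F (Fin 5 → F))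
    (hP12 : P12.submodule ≤ π12) (hP12m : ¬ P12.submodule ≤ m)
    (hP13 : P13.submodule ≤ π13) (hP13m : ¬ P13.submodule ≤ m)
    (hP23 : P23.submodule ≤ π23) (hP23m : ¬ P23.submodule ≤ m)
    (ℓ12 ℓ22 : Submodule F (Fin 5 → F))
    (hℓ12 : ℓ12 = P12.submodule ⊔ P13.submodule)
    (hℓ22 : ℓ22 = P12.submodule ⊔ P23.submodule)
    (ℓ11 ℓ21 : Submodule F (Fin 5 → F))
    (hℓ11dim : finrank F ℓ11 = 2) (hℓ11Sg : ℓ11 ≤ Sg1) (hℓ11M : M1.submodule ≤ ℓ11)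
    (hℓ11skew : ℓ11 ⊓ ℓ12 = ⊥) (hℓ11a : ¬ ℓ11 ≤ π12) (hℓ11b : ¬ ℓ11 ≤ π13)
    (hℓ21dim : finrank F ℓ21 = 2) (hℓ21Sg : ℓ21 ≤ Sg2) (hℓ21M : M2.submodule ≤ ℓ21)
    (hℓ21skew : ℓ21 ⊓ ℓ22 = ⊥) (hℓ21a : ¬ ℓ21 ≤ π12) (hℓ21b : ¬ ℓ21 ≤ π23) :
    (∀ α : Submodule F (Fin 5 → F), finrank F α = 3 →
      α ⊓ ℓ11 ≠ ⊥ → α ⊓ ℓ12 ≠ ⊥ → α ⊓ ℓ21 ≠ ⊥ → α ⊓ ℓ22 ≠ ⊥ →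
      (α ⊓ Sg3 ≤ π13 ∧ finrank F (α ⊓ Sg3 : Submodule F (Fin 5 → F)) = 2 ∧
        M2.submodule ≤ α ⊓ Sg3 ∧ α ⊓ Sg3 ≠ m) ∨
      (α ⊓ Sg3 ≤ π23 ∧ finrank F (α ⊓ Sg3 : Submodule F (Fin 5 → F)) = 2 ∧
        M1.submodule ≤ α ⊓ Sg3 ∧ α ⊓ Sg3 ≠ m) ∨
      (α = π12) ∨
      (finrank F (α ⊓ π12 : Submodule F (Fin 5 → F)) = 1 ∧
        (α ⊓ π12 ≤ M1.submodule ⊔ P12.submodule →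
          α ⊓ π12 = M1.submodule ∨ α ⊓ π12 = P12.submodule) ∧
        (α ⊓ π12 ≤ M2.submodule ⊔ P12.submodule →
          α ⊓ π12 = M2.submodule ∨ α ⊓ π12 = P12.submodule))) ∧
    (∀ A : Projectivization F (Fin 5 → F), A.submodule ≤ π12 →
      ¬ A.submodule ≤ M1.submodule ⊔ P12.submodule →
      ¬ A.submodule ≤ M2.submodule ⊔ P12.submodule →
      ∃! α : Submodule F (Fin 5 → F), finrank F α = 3 ∧
        α ⊓ ℓ11 ≠ ⊥ ∧ α ⊓ ℓ12 ≠ ⊥ ∧ α ⊓ ℓ21 ≠ ⊥ ∧ α ⊓ ℓ22 ≠ ⊥ ∧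
        α ⊓ π12 = A.submodule) :=
  stmt_17_general F Sg1 Sg2 Sg3 hSg1 hSg2 hSg3 m π12 π13 π23 hm hmdim hπ12 hπ13 hπ23 hπ12dim M1 M2
    hM hM1 hM2 P12 P13 P23 hP12 hP12m hP13 hP13m hP23 hP23m ℓ12 ℓ22 hℓ12 hℓ22 ℓ11 ℓ21 hℓ11dim hℓ11Sg
    hℓ11M hℓ11skew hℓ11a hℓ21dim hℓ21Sg hℓ21M hℓ21skew hℓ21a
end
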